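/- arXiv:2412.10965 — 7 statements merged into one kernel-verified Lean document; each statement's English description precedes it below -/
import Mathlib

section
/- Let R be a semiperfect ring. If R is basic (i.e. a complete set of primitive orthogonal idempotents for R is also basic), then every nilpotent element of R lies in the Jacobson radical J(R). -/
universe u

open Function CategoryTheory

/-! ### Ring-theoretic preliminaries -/

/-- The Jacobson radical of a ring (the intersection of all maximal left ideals). -/
def jac (R : Type u) [Ring R] : Ideal R := Ideal.jacobson (⊥ : Ideal R)

section Modules

variable (R : Type u) [Ring R] (M : Type u) [AddCommGroup M] [Module R M]

/-- A submodule `N` of `M` is superfluous (small) if `N ⊔ L = M` implies `L = M`. -/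
def Superfluous (N : Submodule R M) : Prop :=
  ∀ L : Submodule R M, N ⊔ L = ⊤ → L = ⊤

/-- The submodule `I • p` generated by the products of elements of a left ideal `I`
with elements of a submodule `p`. -/
def idealSMul (I : Ideal R) (p : Submodule R M) : Submodule R M :=
  Submodule.span R {x | ∃ a ∈ I, ∃ m ∈ p, x = a • m}

/-- The powers `J(R)^n • M` of the radical acting on a module. -/
def radPow : ℕ → Submodule R M
  | 0 => ⊤
  | n + 1 => idealSMul R M (jac R) (radPow n)

/-- The Loewy length of a module: the least `n` with `J(R)^n M = 0` (`⊤` if none exists). -/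
noncomputable def loewyLength : ℕ∞ :=
  sInf ((↑) '' {n : ℕ | radPow R M n = ⊥})

/-- A projective cover: a linear surjection from a projective module with superfluous kernel. -/
def IsProjectiveCover {P : Type u} [AddCommGroup P] [Module R P]
    (f : P →ₗ[R] M) : Prop :=
  Module.Projective R P ∧ Function.Surjective f ∧ Superfluous R P (LinearMap.ker f)

/-- A module is indecomposable if it is non-zero and admits no non-trivial
direct sum decomposition. -/
def IsIndecomposableModule : Prop :=
  Nontrivial M ∧ ∀ N₁ N₂ : Submodule R M, IsCompl N₁ N₂ → N₁ = ⊥ ∨ N₂ = ⊥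

/-- A submodule is indecomposable if it is non-zero and is not the direct sum of two
non-zero submodules. -/
def IsIndecomposableSubmodule (N : Submodule R M) : Prop :=
  N ≠ ⊥ ∧ ∀ N₁ N₂ : Submodule R M, N₁ ≤ N → N₂ ≤ N → N₁ ⊓ N₂ = ⊥ → N₁ ⊔ N₂ = N →
    N₁ = ⊥ ∨ N₂ = ⊥

end Modules

section Rings

variable (R : Type u) [Ring R]

/-- A ring is semilocal if it is semisimple modulo its Jacobson radical. -/
def IsSemilocalRing : Prop :=
  IsSemisimpleModule R (R ⧸ jac R)

/-- A ring is semiperfect if it is semilocal and idempotents lift modulo the radical. -/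
def IsSemiperfectRing : Prop :=
  IsSemilocalRing R ∧
    ∀ x : R, x * x - x ∈ jac R → ∃ e : R, IsIdempotentElem e ∧ e - x ∈ jac R

/-- A subset `T` of a ring is left T-nilpotent if every sequence in `T` has a
vanishing initial product `a 0 * a 1 * ⋯ * a n`. -/
def IsLeftTNilpotent {R : Type u} [Ring R] (T : Set R) : Prop :=
  ∀ a : ℕ → R, (∀ i, a i ∈ T) → ∃ n : ℕ, ((List.range (n + 1)).map a).prod = 0

/-- A ring is left perfect if it is semilocal with left T-nilpotent radical. -/
def IsLeftPerfectRing : Prop :=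
  IsSemilocalRing R ∧ IsLeftTNilpotent (jac R : Set R)

/-- `I ^ n = 0`: every product of `n` elements of `I` vanishes. -/
def IdealPowZero (I : Ideal R) (n : ℕ) : Prop :=
  ∀ a : ℕ → R, (∀ i, a i ∈ I) → ((List.range n).map a).prod = 0

/-- A ring is semiprimary if it is semilocal and its Jacobson radical is nilpotent. -/
def IsSemiprimaryRing' : Prop :=
  IsSemilocalRing R ∧ ∃ n : ℕ, IdealPowZero R (jac R) n

/-- A primitive idempotent: a non-zero idempotent admitting no non-trivial
decomposition into orthogonal idempotents. -/
def IsPrimitiveIdem (e : R) : Prop :=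
  IsIdempotentElem e ∧ e ≠ 0 ∧
    ∀ f g : R, IsIdempotentElem f → IsIdempotentElem g → f * g = 0 → g * f = 0 →
      f + g = e → f = 0 ∨ g = 0

/-- A complete set of primitive orthogonal idempotents. -/
def IsCompleteOrthogonalPrimitiveSet {ι : Type u} [Fintype ι] (e : ι → R) : Prop :=
  (∀ i, IsPrimitiveIdem R (e i)) ∧ (∀ i j, i ≠ j → e i * e j = 0) ∧ ∑ i, e i = 1

/-- A complete set of primitive orthogonal idempotents is basic if the corresponding
indecomposable projective modules `R e i` are pairwise non-isomorphic. -/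
def IsBasicSet {ι : Type u} [Fintype ι] (e : ι → R) : Prop :=
  IsCompleteOrthogonalPrimitiveSet R e ∧
    ∀ i j, Nonempty ((Ideal.span {e i}) ≃ₗ[R] (Ideal.span {e j})) → i = j

/-- A ring is basic if it admits a complete set of primitive orthogonal idempotents
that is basic. -/
def IsBasicRing : Prop :=
  ∃ (ι : Type u) (_ : Fintype ι) (e : ι → R), IsBasicSet R e

end Rings

/-! ### Homological dimensions -/

section Dim

variable (A : Type u) [Ring A]

/-- `projDimLE A n M`: the `A`-module `M` admits a projective resolution of length `≤ n`. -/
def projDimLE : ℕ → ModuleCat.{u} A → Prop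
  | 0, M => Projective M
  | n + 1, M => ∃ (K P : ModuleCat.{u} A) (f : K ⟶ P) (g : P ⟶ M),
      Projective P ∧ Function.Injective f ∧ Function.Surjective g ∧
      (∀ x, g (f x) = 0) ∧ (∀ y, g y = 0 → ∃ x, f x = y) ∧ projDimLE n K

/-- The projective dimension of a module, as an extended natural number. -/
noncomputable def projDim (M : ModuleCat.{u} A) : ℕ∞ :=
  sInf ((↑) '' {n : ℕ | projDimLE A n M})

/-- `injDimLE A n M`: the `A`-module `M` admits an injective coresolution of length `≤ n`. -/
def injDimLE : ℕ → ModuleCat.{u} A → Prop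
  | 0, M => Injective M
  | n + 1, M => ∃ (I C : ModuleCat.{u} A) (f : M ⟶ I) (g : I ⟶ C),
      Injective I ∧ Function.Injective f ∧ Function.Surjective g ∧
      (∀ x, g (f x) = 0) ∧ (∀ y, g y = 0 → ∃ x, f x = y) ∧ injDimLE n C

/-- The injective dimension of a module, as an extended natural number. -/
noncomputable def injDim (M : ModuleCat.{u} A) : ℕ∞ :=
  sInf ((↑) '' {n : ℕ | injDimLE A n M})

/-- The left global dimension of a ring. -/
noncomputable def glDim : ℕ∞ :=
  ⨆ M : ModuleCat.{u} A, projDim A M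

/-- The little finitistic dimension: the supremum of the projective dimensions of
finitely generated left modules of finite projective dimension. -/
noncomputable def finDim : ℕ∞ :=
  ⨆ (M : ModuleCat.{u} A) (_ : Module.Finite A M ∧ projDim A M ≠ ⊤), projDim A M

/-- The big finitistic dimension: the supremum of the projective dimensions of
all left modules of finite projective dimension. -/
noncomputable def FinDim : ℕ∞ :=
  ⨆ (M : ModuleCat.{u} A) (_ : projDim A M ≠ ⊤), projDim A M

end Dim

/-! ### Induction along a ring homomorphism -/

section Tensor

variable {A B : Type u} [Ring A] [Ring B] (φ : A →+* B)

/-- The relations defining `B ⊗_A M` inside `B ⊗_ℤ M`. -/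
def TensorRel (M : Type u) [AddCommGroup M] [Module A M] :
    Submodule B (TensorProduct ℤ B M) :=
  Submodule.span B
    {x | ∃ (b : B) (a : A) (m : M), x = (b * φ a) ⊗ₜ[ℤ] m - b ⊗ₜ[ℤ] (a • m)}

/-- The induced module `B ⊗_A M` along a ring homomorphism `φ : A →+* B`, realized
as the quotient of `B ⊗_ℤ M` by the bilinearity relations for the `A`-actions. -/
def TensorB (M : Type u) [AddCommGroup M] [Module A M] : Type u :=
  TensorProduct ℤ B M ⧸ TensorRel φ M

noncomputable instance (M : Type u) [AddCommGroup M] [Module A M] :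
    AddCommGroup (TensorB φ M) :=
  inferInstanceAs (AddCommGroup (TensorProduct ℤ B M ⧸ TensorRel φ M))

noncomputable instance (M : Type u) [AddCommGroup M] [Module A M] :
    Module B (TensorB φ M) :=
  inferInstanceAs (Module B (TensorProduct ℤ B M ⧸ TensorRel φ M))

/-- The map induced on `B ⊗_ℤ ·` by an `A`-linear map `f`. -/
noncomputable def tmapAux {M N : Type u} [AddCommGroup M] [Module A M]
    [AddCommGroup N] [Module A N] (f : M →ₗ[A] N) :
    TensorProduct ℤ B M →ₗ[B] TensorProduct ℤ B N :=
  TensorProduct.AlgebraTensorModule.map (LinearMap.id : B →ₗ[B] B)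
    f.toAddMonoidHom.toIntLinearMap

/-- The induction functor on morphisms: `B ⊗_A f : B ⊗_A M →ₗ[B] B ⊗_A N`. -/
noncomputable def tmap {M N : Type u} [AddCommGroup M] [Module A M]
    [AddCommGroup N] [Module A N] (f : M →ₗ[A] N) :
    TensorB φ M →ₗ[B] TensorB φ N :=
  Submodule.mapQ (TensorRel φ M) (TensorRel φ N) (tmapAux (B := B) f) (by
    rw [TensorRel, Submodule.span_le]
    rintro x ⟨b, a, m, rfl⟩
    have : (tmapAux (B := B) f) ((b * φ a) ⊗ₜ[ℤ] m - b ⊗ₜ[ℤ] (a • m)) =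
        (b * φ a) ⊗ₜ[ℤ] (f m) - b ⊗ₜ[ℤ] (a • f m) := by
      simp [tmapAux, map_smul]
    rw [SetLike.mem_coe, Submodule.mem_comap, this]
    exact Submodule.subset_span ⟨b, a, f m, rfl⟩)

/-- `torVanish φ n M` encodes the vanishing `Tor_{n+1}^A(B, M) = 0`, via dimension
shifting through short exact sequences `0 → K → P → M → 0` with `P` projective. -/
def torVanish : ℕ → ModuleCat.{u} A → Prop
  | 0, M => ∀ (K P : ModuleCat.{u} A) (f : K ⟶ P) (g : P ⟶ M),
      Projective P → Function.Injective f → Function.Surjective g →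
      (∀ x, g (f x) = 0) → (∀ y, g y = 0 → ∃ x, f x = y) →
      Function.Injective (tmap φ (f.hom : ↥K →ₗ[A] ↥P))
  | n + 1, M => ∀ (K P : ModuleCat.{u} A) (f : K ⟶ P) (g : P ⟶ M),
      Projective P → Function.Injective f → Function.Surjective g →
      (∀ x, g (f x) = 0) → (∀ y, g y = 0 → ∃ x, f x = y) →
      torVanish n K

/-- The flat dimension of `B` as a right `A`-module along `φ`, characterized by Tor
vanishing: `flatdim B_A ≤ d` iff `Tor_n^A(B, M) = 0` for all `n > d` and all left
`A`-modules `M`. -/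
noncomputable def flatDimR : ℕ∞ :=
  sInf ((↑) '' {d : ℕ | ∀ (M : ModuleCat.{u} A) (n : ℕ), d ≤ n → torVanish φ n M})

/-- `B` as a right `A`-module (i.e. a left `Aᵐᵒᵖ`-module) via `φ`. -/
noncomputable def rightModule : Module Aᵐᵒᵖ B :=
  Module.compHom B (RingHom.op φ)

/-- The projective dimension of `B` as a right `A`-module via `φ`. -/
noncomputable def pdBA : ℕ∞ :=
  letI := rightModule φ
  projDim Aᵐᵒᵖ (ModuleCat.of Aᵐᵒᵖ B)

end Tensor

/-!
Modulo `J = J(R)` the ring is semisimple, and for a primitive idempotent `e` the top `R̄ē` of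
`Re` is simple: a proper summand of it would be cut out by an idempotent of `ēR̄ē`, which lifts
to an idempotent of `eRe` and splits `e`. By Schur's lemma an element `c ∈ eRf \ J` then gives
`R̄ē ≅ R̄f̄`, and lifting the inverse yields `d ∈ fRe` with `cd ≡ e`, `dc ≡ f`, hence `Re ≅ Rf`.
For a basic set `(eᵢ)` this forces `eᵢ R eⱼ ⊆ J` for `i ≠ j`, while the same argument shows
that the corners `ēᵢ R̄ ēᵢ` have no non-zero square-zero elements. So `R̄` is reduced, and the
image of a nilpotent element in `R̄` vanishes.
-/

section Jacobson

variable {R : Type u} [Ring R]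

instance jac.isTwoSided : (jac R).IsTwoSided :=
  inferInstanceAs (Ideal.jacobson (⊥ : Ideal R)).IsTwoSided

lemma exists_mul_one_add_eq_one_of_mem_jac {x : R} (hx : x ∈ jac R) : ∃ z, z * (1 + x) = 1 := by
  obtain ⟨z, hz⟩ := Ideal.mem_jacobson_iff.1 hx 1
  rw [Submodule.mem_bot, sub_eq_zero, mul_one] at hz
  exact ⟨z, by rw [mul_add, mul_one, add_comm, hz]⟩

lemma isUnit_one_add_of_mem_jac {x : R} (hx : x ∈ jac R) : IsUnit (1 + x) := by
  obtain ⟨z, hz⟩ := exists_mul_one_add_eq_one_of_mem_jac hx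
  have hz' : 1 + -(z * x) = z := by rw [← hz]; noncomm_ring
  obtain ⟨w, hw⟩ := exists_mul_one_add_eq_one_of_mem_jac (neg_mem ((jac R).mul_mem_left z hx))
  rw [hz'] at hw
  have hw' : w = 1 + x := by
    calc w = w * (z * (1 + x)) := by rw [hz, mul_one]
      _ = 1 + x := by rw [← mul_assoc, hw, one_mul]
  exact ⟨⟨1 + x, z, hw' ▸ hw, hz⟩, rfl⟩

lemma IsIdempotentElem.eq_zero_of_mem_jac {e : R} (he : IsIdempotentElem e) (h : e ∈ jac R) :
    e = 0 := by
  obtain ⟨z, hz⟩ := exists_mul_one_add_eq_one_of_mem_jac (neg_mem h)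
  calc e = z * (1 + -e) * e := by rw [hz, one_mul]
    _ = 0 := by rw [mul_assoc, add_mul, neg_mul, he.eq, one_mul, add_neg_cancel, mul_zero]

lemma exists_isIdempotentElem_corner_lift
    (hlift : ∀ x : R, x * x - x ∈ jac R → ∃ e, IsIdempotentElem e ∧ e - x ∈ jac R)
    {e y : R} (he : IsIdempotentElem e) (hey : e * y = y) (hye : y * e = y)
    (hy : y * y - y ∈ jac R) :
    ∃ g, IsIdempotentElem g ∧ e * g = g ∧ g * e = g ∧ g - y ∈ jac R := by
  obtain ⟨h, hh, hhy⟩ := hlift y hy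
  have hJ : (e - 1) * h ∈ jac R := by
    have : (e - 1) * h = (e - 1) * (h - y) := by
      rw [mul_sub, sub_mul e 1 y, hey, one_mul, sub_self, sub_zero]
    exact this ▸ (jac R).mul_mem_left _ hhy
  -- conjugating `h` by the unit `v = 1 + (e - 1) h ≡ 1` moves it into `e R`, as `v h = e h`
  obtain ⟨v, hv⟩ := isUnit_one_add_of_mem_jac hJ
  have hvh : (v : R) * h = e * h := by
    rw [hv, add_mul, one_mul, mul_assoc, hh.eq]; noncomm_ring
  set f := (v : R) * h * ↑v⁻¹ with hfdef
  have hf : IsIdempotentElem f := by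
    calc f * f = v * h * (↑v⁻¹ * v) * h * ↑v⁻¹ := by simp only [hfdef, mul_assoc]
      _ = f := by rw [Units.inv_mul, mul_one, mul_assoc (v : R) h h, hh.eq]
  have hef : e * f = f := by
    calc e * f = e * (v * h) * ↑v⁻¹ := by rw [hfdef, mul_assoc e]
      _ = f := by rw [hvh, ← mul_assoc, he.eq, ← hvh]
  have hfy : f - y ∈ jac R := by
    have hcomm : (v : R) * h - h * v ∈ jac R := by
      have : (v : R) * h - h * v = (e - 1) * h * h - h * ((e - 1) * h) := by
        rw [hv]; noncomm_ring
      exact this ▸ sub_mem ((jac R).mul_mem_right h hJ) ((jac R).mul_mem_left h hJ)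
    have : f - y = ((v : R) * h - h * v) * ↑v⁻¹ + (h - y) := by
      rw [sub_mul, mul_assoc h, Units.mul_inv, mul_one]; abel
    exact this ▸ add_mem ((jac R).mul_mem_right _ hcomm) hhy
  refine ⟨f * e, ?_, by rw [← mul_assoc, hef], by rw [mul_assoc, he.eq], ?_⟩
  · change f * e * (f * e) = f * e
    rw [mul_assoc f e, ← mul_assoc e, hef, ← mul_assoc, hf.eq]
  · have : f * e - y = (f - y) * e := by rw [sub_mul, hye]
    exact this ▸ (jac R).mul_mem_right e hfy

end Jacobson

section PrincipalIdeals

variable {R : Type u} [Ring R]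

lemma IsIdempotentElem.mem_span_singleton_iff {e x : R} (he : IsIdempotentElem e) :
    x ∈ Ideal.span {e} ↔ x * e = x := by
  refine ⟨fun h => ?_, fun h => Ideal.mem_span_singleton'.2 ⟨x, h⟩⟩
  obtain ⟨a, rfl⟩ := Ideal.mem_span_singleton'.1 h
  rw [mul_assoc, he.eq]

def Ideal.mulRightOn (I : Ideal R) {K : Ideal R} {c : R} (hc : c ∈ K) : I →ₗ[R] K :=
  (LinearMap.toSpanSingleton R R c).restrict fun x _ => K.mul_mem_left x hc

lemma Ideal.mulRightOn_comp {I K L : Ideal R} {a b : R} (ha : a ∈ K) (hb : b ∈ L) :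
    K.mulRightOn hb ∘ₗ I.mulRightOn ha = I.mulRightOn (L.mul_mem_left a hb) :=
  LinearMap.ext fun x => Subtype.ext (mul_assoc (x : R) a b)

lemma bijective_mulRightOn_span_of_sub_mem_jac {e c : R} (he : IsIdempotentElem e)
    (hec : e * c = c) (hc : c ∈ Ideal.span {e}) (hcJ : c - e ∈ jac R) :
    Bijective ((Ideal.span {e}).mulRightOn hc) := by
  obtain ⟨u, hu⟩ := isUnit_one_add_of_mem_jac hcJ
  have hce : c * e = c := he.mem_span_singleton_iff.1 hc
  have hmul : ∀ y ∈ Ideal.span {e}, y * c = y * u := fun y hy => by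
    rw [hu, mul_add, mul_sub, he.mem_span_singleton_iff.1 hy, mul_one, add_sub_cancel]
  have hcomm : Commute (u : R) e := by
    rw [Commute, SemiconjBy, hu, add_mul, mul_add, sub_mul, mul_sub, hce, hec, he.eq, one_mul,
      mul_one]
  refine ⟨(injective_iff_map_eq_zero _).2 fun y hy => Subtype.ext ?_, fun z => ?_⟩
  · have : (y : R) * c = 0 := congr_arg Subtype.val hy
    rwa [hmul y y.2, u.isUnit.mul_left_eq_zero] at this
  · have hzu : (z : R) * ↑u⁻¹ ∈ Ideal.span {e} := by
      rw [he.mem_span_singleton_iff, mul_assoc, hcomm.units_inv_left.eq, ← mul_assoc,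
        he.mem_span_singleton_iff.1 z.2]
    refine ⟨⟨_, hzu⟩, Subtype.ext ?_⟩
    change (z : R) * ↑u⁻¹ * c = z
    rw [hmul _ hzu, mul_assoc, Units.inv_mul, mul_one]

lemma nonempty_linearEquiv_span_of_mul_sub_mem_jac {e f a b : R} (he : IsIdempotentElem e)
    (hf : IsIdempotentElem f) (hea : e * a = a) (haf : a * f = a) (hfb : f * b = b)
    (hbe : b * e = b) (hab : a * b - e ∈ jac R) (hba : b * a - f ∈ jac R) :
    Nonempty (Ideal.span {e} ≃ₗ[R] Ideal.span {f}) := by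
  have ha : a ∈ Ideal.span {f} := hf.mem_span_singleton_iff.2 haf
  have hb : b ∈ Ideal.span {e} := he.mem_span_singleton_iff.2 hbe
  have hba' : Bijective ((Ideal.span {e}).mulRightOn ha ∘ (Ideal.span {f}).mulRightOn hb) := by
    rw [← LinearMap.coe_comp, Ideal.mulRightOn_comp]
    exact bijective_mulRightOn_span_of_sub_mem_jac hf (by rw [← mul_assoc, hfb]) _ hba
  have hab' : Bijective ((Ideal.span {f}).mulRightOn hb ∘ (Ideal.span {e}).mulRightOn ha) := by
    rw [← LinearMap.coe_comp, Ideal.mulRightOn_comp]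
    exact bijective_mulRightOn_span_of_sub_mem_jac he (by rw [← mul_assoc, hea]) _ hab
  exact ⟨.ofBijective ((Ideal.span {e}).mulRightOn ha)
    ⟨hab'.injective.of_comp, hba'.surjective.of_comp⟩⟩

end PrincipalIdeals

section QuotientModule

variable {R : Type u} [Ring R]

open Submodule.Quotient

variable (R) in
noncomputable def mulRightQuot (c : R) : Module.End R (R ⧸ jac R) :=
  Submodule.mapQ _ _ (LinearMap.toSpanSingleton R R c) fun _ ha => (jac R).mul_mem_right c ha

@[simp]
lemma mulRightQuot_mk (c r : R) : mulRightQuot R c (mk r) = mk (r * c) := rfl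

lemma mulRightQuot_mul (a b : R) : mulRightQuot R (a * b) = mulRightQuot R b ∘ₗ mulRightQuot R a :=
  Submodule.linearMap_qext _ <| LinearMap.ext_ring <| by
    simp only [LinearMap.comp_apply, Submodule.mkQ_apply, mulRightQuot_mk, mul_assoc]

lemma exists_mulRightQuot_eq (φ : Module.End R (R ⧸ jac R)) : ∃ c, φ = mulRightQuot R c := by
  obtain ⟨c, hc⟩ := mk_surjective _ (φ (mk 1))
  refine ⟨c, Submodule.linearMap_qext _ <| LinearMap.ext_ring ?_⟩
  simp only [LinearMap.comp_apply, Submodule.mkQ_apply, mulRightQuot_mk, one_mul, hc]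

lemma mulRightQuot_mem_span_mk {c f : R} (hcf : c * f = c) (m : R ⧸ jac R) :
    mulRightQuot R c m ∈ R ∙ mk f := by
  obtain ⟨r, rfl⟩ := mk_surjective _ m
  exact Submodule.mem_span_singleton.2 ⟨r * c, by rw [← mk_smul, smul_eq_mul, mul_assoc, hcf,
    mulRightQuot_mk]⟩

lemma mulRightQuot_eq_self_of_mem_span_mk {e : R} (he : IsIdempotentElem e) {m : R ⧸ jac R}
    (hm : m ∈ R ∙ mk e) : mulRightQuot R e m = m := by
  obtain ⟨a, rfl⟩ := Submodule.mem_span_singleton.1 hm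
  rw [map_smul, mulRightQuot_mk, he.eq]

lemma exists_corner_projection [IsSemisimpleModule R (R ⧸ jac R)] {e : R}
    (he : IsIdempotentElem e) {N : Submodule R (R ⧸ jac R)} (hN : N ≤ R ∙ mk e) :
    ∃ z, e * z = z ∧ z * e = z ∧ (∀ m, mulRightQuot R z m ∈ N) ∧
      ∀ m ∈ N, mulRightQuot R z m = m := by
  obtain ⟨C, hC⟩ := exists_isCompl N
  obtain ⟨y, hy⟩ := exists_mulRightQuot_eq (N.subtype ∘ₗ N.projectionOnto C hC)
  have hfix : ∀ m ∈ N, mulRightQuot R e m = m := fun m hm =>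
    mulRightQuot_eq_self_of_mem_span_mk he (hN hm)
  have hmul : ∀ m, mulRightQuot R (e * y * e) m =
      mulRightQuot R e (N.projectionOnto C hC (mulRightQuot R e m)) := fun m => by
    rw [mulRightQuot_mul, mulRightQuot_mul, ← hy]; rfl
  refine ⟨e * y * e, by rw [← mul_assoc, ← mul_assoc, he.eq], by rw [mul_assoc, he.eq],
    fun m => ?_, fun m hm => ?_⟩
  · rw [hmul, hfix _ (Submodule.coe_mem _)]
    exact Submodule.coe_mem _
  · rw [hmul, hfix m hm, ← Submodule.coe_mk m hm, Submodule.projectionOnto_apply_left,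
      hfix m hm]

lemma isAtom_span_mk_of_isPrimitiveIdem (hsp : IsSemiperfectRing R) {e : R}
    (he : IsPrimitiveIdem R e) : IsAtom (R ∙ (mk e : R ⧸ jac R)) := by
  obtain ⟨hss, hlift⟩ := hsp
  obtain ⟨he, hne, hprim⟩ := he
  have : IsSemisimpleModule R (R ⧸ jac R) := hss
  refine ⟨fun h => hne (he.eq_zero_of_mem_jac ?_), fun N hN => ?_⟩
  · rwa [Submodule.span_singleton_eq_bot, mk_eq_zero] at h
  obtain ⟨z, hez, hze, hzN, hzfix⟩ := exists_corner_projection he hN.le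
  have hzmem : mk z ∈ N := by simpa only [mulRightQuot_mk, one_mul] using hzN (mk 1)
  have hzz : z * z - z ∈ jac R := by
    rw [← Submodule.Quotient.eq, ← mulRightQuot_mk, hzfix _ hzmem]
  obtain ⟨g, hg, heg, hge, hgz⟩ := exists_isIdempotentElem_corner_lift hlift he hez hze hzz
  rcases hprim g (e - g) hg (hg.sub he hge heg) (by rw [mul_sub, hg.eq, hge, sub_self])
    (by rw [sub_mul, heg, hg.eq, sub_self]) (add_sub_cancel g e) with rfl | hg
  · have hzJ : z ∈ jac R := by simpa using neg_mem hgz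
    refine eq_bot_iff.2 fun m hm => ?_
    obtain ⟨r, rfl⟩ := mk_surjective _ m
    rw [Submodule.mem_bot, ← hzfix _ hm, mulRightQuot_mk, mk_eq_zero]
    exact (jac R).mul_mem_left r hzJ
  · have hez : mk e = (mk z : R ⧸ jac R) := by
      rwa [Submodule.Quotient.eq, sub_eq_zero.1 hg]
    exact absurd ((Submodule.span_singleton_le_iff_mem _ _).2 (hez ▸ hzmem)) hN.not_ge

/-- Schur's lemma for the simple tops: right multiplication by `c` is an isomorphism
`R ∙ ē ≅ R ∙ f̄`, and `d` lifts its inverse. -/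
lemma exists_mul_sub_mem_jac_of_notMem_jac {e f c : R} (he : IsIdempotentElem e)
    (hf : IsIdempotentElem f) (hSe : IsAtom (R ∙ (mk e : R ⧸ jac R)))
    (hSf : IsAtom (R ∙ (mk f : R ⧸ jac R))) (hec : e * c = c) (hcf : c * f = c)
    (hc : c ∉ jac R) :
    ∃ d, f * d = d ∧ d * e = d ∧ c * d - e ∈ jac R ∧ d * c - f ∈ jac R := by
  have := isSimpleModule_iff_isAtom.2 hSe
  have := isSimpleModule_iff_isAtom.2 hSf
  let φ : (R ∙ (mk e : R ⧸ jac R)) →ₗ[R] (R ∙ (mk f : R ⧸ jac R)) :=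
    (mulRightQuot R c).restrict fun m _ => mulRightQuot_mem_span_mk hcf m
  have hφ : φ ≠ 0 := fun h => hc <| by
    have := congr_arg Subtype.val
      (LinearMap.congr_fun h ⟨mk e, Submodule.mem_span_singleton_self _⟩)
    rwa [LinearMap.coe_restrict_apply, mulRightQuot_mk, hec, LinearMap.zero_apply,
      Submodule.coe_zero, mk_eq_zero] at this
  obtain ⟨hinj, hsurj⟩ := LinearMap.bijective_of_ne_zero hφ
  obtain ⟨⟨m, hm⟩, hmf⟩ := hsurj ⟨mk f, Submodule.mem_span_singleton_self _⟩
  obtain ⟨a, rfl⟩ := Submodule.mem_span_singleton.1 hm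
  have hac : a * e * c - f ∈ jac R := by
    have : mulRightQuot R c (a • mk e) = mk f := congr_arg Subtype.val hmf
    rwa [← mk_smul, mulRightQuot_mk, smul_eq_mul, Submodule.Quotient.eq] at this
  have hdc : f * a * e * c - f ∈ jac R := by
    have : f * a * e * c - f = f * (a * e * c - f) := by
      rw [mul_sub, hf.eq]; simp only [mul_assoc]
    exact this ▸ (jac R).mul_mem_left f hac
  refine ⟨f * a * e, by rw [← mul_assoc, ← mul_assoc, hf.eq], by rw [mul_assoc, he.eq], ?_, hdc⟩
  have hcd : (mk (c * (f * a * e)) : R ⧸ jac R) ∈ R ∙ mk e :=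
    Submodule.mem_span_singleton.2 ⟨c * (f * a), by rw [← mk_smul, smul_eq_mul, mul_assoc]⟩
  have := hinj (a₁ := ⟨_, hcd⟩) (a₂ := ⟨mk e, Submodule.mem_span_singleton_self _⟩) <| by
    refine Subtype.ext ?_
    rw [LinearMap.coe_restrict_apply, LinearMap.coe_restrict_apply, mulRightQuot_mk,
      mulRightQuot_mk, hec, Submodule.Quotient.eq]
    have : c * (f * a * e) * c - c = c * (f * a * e * c - f) := by
      rw [mul_sub, hcf]; simp only [mul_assoc]
    exact this ▸ (jac R).mul_mem_left c hdc
  exact (Submodule.Quotient.eq _).1 (congr_arg Subtype.val this)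

end QuotientModule

theorem isReduced_of_offDiag_eq_zero {S : Type*} [Ring S] {ι : Type*} [Fintype ι]
    (ε : ι → S) (hsum : ∑ i, ε i = 1) (hoff : ∀ i j, i ≠ j → ∀ s, ε i * s * ε j = 0)
    (hdiag : ∀ i a, ε i * a = a → a * ε i = a → a * a = 0 → a = 0) : IsReduced S := by
  classical
  have hsingle : ∀ i (f : ι → S), (∀ j, j ≠ i → f j = 0) → ∑ j, f j = f i := fun i f hf =>
    Finset.sum_eq_single i (fun j _ hj => hf j hj) (by simp)
  have hidem : ∀ i, ε i * ε i = ε i := fun i => by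
    calc ε i * ε i = ∑ j, ε i * 1 * ε j := by
          rw [hsingle i _ fun j hj => hoff i j (Ne.symm hj) 1, mul_one]
      _ = ε i := by rw [← Finset.mul_sum, hsum, mul_one, mul_one]
  refine (isReduced_iff_pow_one_lt 2 one_lt_two).2 fun s hs => ?_
  have hdecomp : s = ∑ i, ∑ j, ε i * s * ε j := by
    simp only [← Finset.mul_sum, ← Finset.sum_mul, hsum, one_mul, mul_one]
  rw [hdecomp]
  refine Finset.sum_eq_zero fun i _ => Finset.sum_eq_zero fun j _ => ?_
  obtain rfl | hij := eq_or_ne i j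
  · refine hdiag i _ (by rw [← mul_assoc, ← mul_assoc, hidem]) (by rw [mul_assoc, hidem]) ?_
    calc ε i * s * ε i * (ε i * s * ε i) = ∑ k, ε i * s * ε k * s * ε i := by
          rw [hsingle i _ fun k hk => by rw [hoff i k (Ne.symm hk), zero_mul, zero_mul]]
          simp only [mul_assoc, ← mul_assoc (ε i) (ε i), hidem]
      _ = 0 := by
          rw [← Finset.sum_mul, ← Finset.sum_mul, ← Finset.mul_sum, hsum, mul_one,
            mul_assoc (ε i) s s, ← pow_two, hs, mul_zero, zero_mul]
  · exact hoff i j hij s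

section Semiperfect

variable {R : Type u} [Ring R]

lemma mem_jac_of_mul_self_mem_jac_of_isPrimitiveIdem (hsp : IsSemiperfectRing R) {e a : R}
    (he : IsPrimitiveIdem R e) (hea : e * a = a) (hae : a * e = a) (ha : a * a ∈ jac R) :
    a ∈ jac R := by
  by_contra hc
  have hS := isAtom_span_mk_of_isPrimitiveIdem hsp he
  obtain ⟨d, -, -, -, hda⟩ := exists_mul_sub_mem_jac_of_notMem_jac he.1 he.1 hS hS hea hae hc
  have : a = d * (a * a) - (d * a - e) * a := by rw [sub_mul, hea, ← mul_assoc]; abel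
  exact hc (this ▸ sub_mem ((jac R).mul_mem_left d ha) ((jac R).mul_mem_right a hda))

lemma IsBasicSet.mul_mul_mem_jac (hsp : IsSemiperfectRing R) {ι : Type u} [Fintype ι]
    {e : ι → R} (he : IsBasicSet R e) {i j : ι} (hij : i ≠ j) (r : R) : e i * r * e j ∈ jac R := by
  obtain ⟨⟨hprim, -, -⟩, hbasic⟩ := he
  by_contra hc
  obtain ⟨d, hd, hd', hcd, hdc⟩ := exists_mul_sub_mem_jac_of_notMem_jac (hprim i).1 (hprim j).1
    (isAtom_span_mk_of_isPrimitiveIdem hsp (hprim i))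
    (isAtom_span_mk_of_isPrimitiveIdem hsp (hprim j))
    (by rw [← mul_assoc, ← mul_assoc, (hprim i).1.eq]) (by rw [mul_assoc, (hprim j).1.eq]) hc
  exact hij (hbasic i j (nonempty_linearEquiv_span_of_mul_sub_mem_jac (hprim i).1 (hprim j).1
    (by rw [← mul_assoc, ← mul_assoc, (hprim i).1.eq]) (by rw [mul_assoc, (hprim j).1.eq])
    hd hd' hcd hdc))

theorem IsBasicSet.isReduced_quotient_jac (hsp : IsSemiperfectRing R) {ι : Type u} [Fintype ι]
    {e : ι → R} (he : IsBasicSet R e) : IsReduced (R ⧸ jac R) := by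
  let π := Ideal.Quotient.mk (jac R)
  refine isReduced_of_offDiag_eq_zero (π ∘ e)
    (by rw [← map_one π, ← he.1.2.2, map_sum]; rfl) (fun i j hij s => ?_) (fun i a hia hai ha => ?_)
  · obtain ⟨r, rfl⟩ := Ideal.Quotient.mk_surjective s
    rw [comp_apply, comp_apply, ← map_mul, ← map_mul, Ideal.Quotient.eq_zero_iff_mem]
    exact he.mul_mul_mem_jac hsp hij r
  · obtain ⟨r, rfl⟩ := Ideal.Quotient.mk_surjective a
    have hr : π (e i * r * e i) = π r := by
      rw [map_mul, map_mul, show π (e i) * π r = π r from hia, show π r * π (e i) = π r from hai]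
    have hprim := he.1.1 i
    rw [← hr, ← map_mul, Ideal.Quotient.eq_zero_iff_mem] at ha
    rw [← hr, Ideal.Quotient.eq_zero_iff_mem]
    exact mem_jac_of_mul_self_mem_jac_of_isPrimitiveIdem hsp hprim
      (by rw [← mul_assoc, ← mul_assoc, hprim.1.eq]) (by rw [mul_assoc, hprim.1.eq]) ha

end Semiperfect

/-- If a semiperfect ring is basic, then every nilpotent element
lies in the Jacobson radical. -/
theorem statement_0 (R : Type u) [Ring R] (hsp : IsSemiperfectRing R)
    (hb : IsBasicRing R) : ∀ x : R, IsNilpotent x → x ∈ jac R := by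
  obtain ⟨ι, _, e, he⟩ := hb
  have := he.isReduced_quotient_jac hsp
  intro x hx
  rw [← Ideal.Quotient.eq_zero_iff_mem]
  exact (hx.map (Ideal.Quotient.mk (jac R))).eq_zero
end

section
/- Let R be a semiperfect ring whose Jacobson radical is nil. Then R is basic if and only if the Jacobson radical J(R) equals the set N(R) of nilpotent elements of R. -/
/-!
Modulo a nil ideal, idempotents lift, and so do primitivity and the Murray–von Neumann
equivalence `e ∼ f ↔ ∃ a b, a * b = e ∧ b * a = f`, which for idempotents says `R e ≅ R f`.
So `R` is basic iff the semisimple ring `Q = R ⧸ J(R)` has a complete set of pairwise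
inequivalent primitive orthogonal idempotents. For a primitive idempotent `e` of `Q` the left
ideal `Q e` is simple, so by Schur's lemma a non-zero element of `e Q f` gives `Q e ≅ Q f`.
Hence for pairwise inequivalent `e i` all `e i Q e j` with `i ≠ j` vanish, the `e i` are
central, and no corner `e i Q e i` contains a non-zero square-zero element: `Q` is reduced.
Conversely, idempotents of a reduced ring are central, so equivalent idempotents coincide.
Finally, as `J(R)` is nil, `Q` is reduced iff `J(R)` contains every nilpotent element.
-/

universe u

open Function CategoryTheory

section MurrayVonNeumann

variable {R : Type*} [Ring R]

def MurrayVonNeumannEquiv (e f : R) : Prop :=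
  ∃ a b : R, a * b = e ∧ b * a = f

theorem MurrayVonNeumannEquiv.map {Q : Type*} [Ring Q] (f : R →+* Q) {e e' : R}
    (h : MurrayVonNeumannEquiv e e') : MurrayVonNeumannEquiv (f e) (f e') := by
  obtain ⟨a, b, rfl, rfl⟩ := h
  exact ⟨f a, f b, (map_mul f a b).symm, (map_mul f b a).symm⟩

theorem IsIdempotentElem.mul_eq_self_of_mem_span {e x : R} (he : IsIdempotentElem e)
    (hx : x ∈ Ideal.span {e}) : x * e = x := by
  obtain ⟨c, rfl⟩ := Ideal.mem_span_singleton'.mp hx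
  rw [mul_assoc, he.eq]

theorem IsIdempotentElem.linearMap_span_apply {M : Type*} [AddCommGroup M] [Module R M] {e : R}
    (he : IsIdempotentElem e) (g : Ideal.span {e} →ₗ[R] M) (x : Ideal.span {e}) :
    g x = (x : R) • g ⟨e, Ideal.mem_span_singleton_self e⟩ := by
  rw [← map_smul]
  congr 1
  exact Subtype.ext (he.mul_eq_self_of_mem_span x.2).symm

def spanSingletonMulRight (e : R) {f c : R} (hc : c ∈ Ideal.span {f}) :
    Ideal.span {e} →ₗ[R] Ideal.span {f} :=
  (LinearMap.toSpanSingleton R R c).restrict fun x _ => Ideal.mul_mem_left _ x hc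

@[simp]
theorem coe_spanSingletonMulRight_apply (e : R) {f c : R} (hc : c ∈ Ideal.span {f})
    (x : Ideal.span {e}) : (spanSingletonMulRight e hc x : R) = x * c :=
  rfl

theorem murrayVonNeumannEquiv_iff_nonempty_linearEquiv {e f : R} (he : IsIdempotentElem e)
    (hf : IsIdempotentElem f) :
    MurrayVonNeumannEquiv e f ↔ Nonempty (Ideal.span {e} ≃ₗ[R] Ideal.span {f}) := by
  constructor
  · rintro ⟨a, b, rfl, rfl⟩
    have hcube : ∀ {p q : R}, IsIdempotentElem (p * q) →
        p * (q * (p * (q * (p * q)))) = p * q := fun {p q} hpq => by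
      rw [show p * (q * (p * (q * (p * q)))) = p * q * (p * q) * (p * q) by noncomm_ring,
          hpq.eq, hpq.eq]
    refine ⟨.ofLinearMap
      (spanSingletonMulRight _ (Ideal.mul_mem_left _ a (Ideal.mem_span_singleton_self (b * a))))
      (spanSingletonMulRight _ (Ideal.mul_mem_left _ b (Ideal.mem_span_singleton_self (a * b))))
      ?_ ?_⟩ <;> ext ⟨x, hx⟩ <;> simp only [LinearMap.coe_comp, comp_apply,
        coe_spanSingletonMulRight_apply, LinearMap.id_coe, id_eq, mul_assoc]
    · rw [hcube hf, hf.mul_eq_self_of_mem_span hx]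
    · rw [hcube he, he.mul_eq_self_of_mem_span hx]
  · rintro ⟨g⟩
    refine ⟨g ⟨e, Ideal.mem_span_singleton_self e⟩,
      g.symm ⟨f, Ideal.mem_span_singleton_self f⟩, ?_, ?_⟩
    · have h := congrArg Subtype.val (g.symm_apply_apply ⟨e, Ideal.mem_span_singleton_self e⟩)
      rwa [← LinearEquiv.coe_coe, hf.linearMap_span_apply, Submodule.coe_smul, smul_eq_mul,
        LinearEquiv.coe_coe] at h
    · have h := congrArg Subtype.val (g.apply_symm_apply ⟨f, Ideal.mem_span_singleton_self f⟩)
      rwa [← LinearEquiv.coe_coe, he.linearMap_span_apply, Submodule.coe_smul, smul_eq_mul,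
        LinearEquiv.coe_coe] at h

theorem IsIdempotentElem.commute_of_isReduced [IsReduced R] {e : R} (he : IsIdempotentElem e)
    (x : R) : Commute e x := by
  have hl : e * x * (1 - e) = 0 := IsReduced.eq_zero _ ⟨2, by
    rw [sq, show e * x * (1 - e) * (e * x * (1 - e)) = e * x * ((1 - e) * e) * x * (1 - e) by
      noncomm_ring, he.one_sub_mul_self, mul_zero, zero_mul, zero_mul]⟩
  have hr : (1 - e) * x * e = 0 := IsReduced.eq_zero _ ⟨2, by
    rw [sq, show (1 - e) * x * e * ((1 - e) * x * e) = (1 - e) * x * (e * (1 - e)) * x * e by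
      noncomm_ring, he.mul_one_sub_self, mul_zero, zero_mul, zero_mul]⟩
  rw [mul_sub, mul_one, sub_eq_zero] at hl
  rw [sub_mul, sub_mul, one_mul, sub_eq_zero] at hr
  exact hl.trans hr.symm

theorem MurrayVonNeumannEquiv.eq_of_isReduced [IsReduced R] {e f : R} (he : IsIdempotentElem e)
    (hf : IsIdempotentElem f) (h : MurrayVonNeumannEquiv e f) : e = f := by
  obtain ⟨a, b, rfl, rfl⟩ := h
  calc a * b = a * b * (a * b) := he.eq.symm
    _ = a * (b * a) * b := by noncomm_ring
    _ = b * a * (a * b) := by rw [← (hf.commute_of_isReduced a).eq]; noncomm_ring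
    _ = a * b * (b * a) := ((he.commute_of_isReduced (b * a)).eq).symm
    _ = b * (a * b) * a := by rw [← mul_assoc, (he.commute_of_isReduced b).eq, mul_assoc]
    _ = b * a := by rw [show b * (a * b) * a = b * a * (b * a) by noncomm_ring, hf.eq]

theorem IsIdempotentElem.exists_mul_eq_and_mul_eq_of_isNilpotent_sub {e z : R}
    (he : IsIdempotentElem e) (hez : e * z = z) (hze : z * e = z) (hnil : IsNilpotent (z - e)) :
    ∃ u : R, z * u = e ∧ u * z = e := by
  -- `z` is invertible in the corner ring `e R e`; its inverse is read off from the unit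
  -- `z + (1 - e) = 1 + (z - e)` of `R`.
  obtain ⟨t, ht⟩ := hnil.isUnit_one_add
  have het : e * t = z := by rw [ht, mul_add, mul_one, mul_sub, hez, he.eq, add_sub_cancel]
  have hte : t * e = z := by rw [ht, add_mul, one_mul, sub_mul, hze, he.eq, add_sub_cancel]
  exact ⟨↑t⁻¹, by rw [← het, mul_assoc, Units.mul_inv, mul_one],
    by rw [← hte, ← mul_assoc, Units.inv_mul, one_mul]⟩

variable {Q : Type*} [Ring Q] {f : R →+* Q}

theorem MurrayVonNeumannEquiv.of_map (hf : Surjective f)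
    (hker : ∀ x ∈ RingHom.ker f, IsNilpotent x) {e e' : R} (he : IsIdempotentElem e)
    (he' : IsIdempotentElem e') (h : MurrayVonNeumannEquiv (f e) (f e')) :
    MurrayVonNeumannEquiv e e' := by
  obtain ⟨A, B, hAB, hBA⟩ := h
  obtain ⟨x, rfl⟩ := hf A
  obtain ⟨y, rfl⟩ := hf B
  -- Cut the lifts of `A` and `B` down to the corners `e R e'` and `e' R e`: then `a * b` and
  -- `b * a` are invertible in `e R e` and `e' R e'` up to nilpotent elements.
  set a := e * x * e'
  set b := e' * y * e
  have hAB' : IsIdempotentElem (f x * f y) := hAB ▸ he.map f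
  have hBA' : IsIdempotentElem (f y * f x) := hBA ▸ he'.map f
  have hab : f (a * b) = f e := by
    calc f (a * b) = f x * f y * (f x * f y) * (f x * f y * (f x * f y)) * (f x * f y) := by
          simp only [a, b, map_mul, ← hAB, ← hBA, mul_assoc]
      _ = f e := by rw [hAB'.eq, hAB'.eq, hAB'.eq, hAB]
  have hba : f (b * a) = f e' := by
    calc f (b * a) = f y * f x * (f y * f x) * (f y * f x * (f y * f x)) * (f y * f x) := by
          simp only [a, b, map_mul, ← hAB, ← hBA, mul_assoc]
      _ = f e' := by rw [hBA'.eq, hBA'.eq, hBA'.eq, hBA]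
  have hker_sub : ∀ {r s : R}, f r = f s → IsNilpotent (r - s) := fun h =>
    hker _ (by rw [RingHom.mem_ker, map_sub, h, sub_self])
  obtain ⟨u, hu, hu'⟩ := he.exists_mul_eq_and_mul_eq_of_isNilpotent_sub
    (by simp only [a, ← mul_assoc, he.eq]) (by simp only [b, mul_assoc, he.eq]) (hker_sub hab)
  obtain ⟨w, hw, -⟩ := he'.exists_mul_eq_and_mul_eq_of_isNilpotent_sub
    (by simp only [b, ← mul_assoc, he'.eq]) (by simp only [a, mul_assoc, he'.eq]) (hker_sub hba)
  have hbe : b * e = b := by simp only [b, mul_assoc, he.eq]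
  have hae' : a * e' = a := by simp only [a, mul_assoc, he'.eq]
  refine ⟨a, b * u, by rw [← mul_assoc, hu], ?_⟩
  calc b * u * a = b * u * a * (b * a * w) := by rw [hw, mul_assoc _ a, hae']
    _ = b * (u * (a * b)) * a * w := by simp only [mul_assoc]
    _ = e' := by rw [hu', hbe, hw]

end MurrayVonNeumann

section Primitive

variable {R Q : Type u} [Ring R] [Ring Q]

theorem IsPrimitiveIdem.eq_zero_or_eq {e g : R} (he : IsPrimitiveIdem R e)
    (hg : IsIdempotentElem g) (heg : e * g = g) (hge : g * e = g) : g = 0 ∨ g = e := by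
  refine (he.2.2 g (e - g) hg (hg.sub he.1 hge heg) ?_ ?_ (add_sub_cancel g e)).imp_right
    (fun h => (sub_eq_zero.mp h).symm)
  · rw [mul_sub, hge, hg.eq, sub_self]
  · rw [sub_mul, heg, hg.eq, sub_self]

theorem IsPrimitiveIdem.of_map {f : R →+* Q} (hker : ∀ x ∈ RingHom.ker f, IsNilpotent x)
    {e : R} (he : IsIdempotentElem e) (h : IsPrimitiveIdem Q (f e)) : IsPrimitiveIdem R e := by
  have hzero : ∀ {p : R}, IsIdempotentElem p → f p = 0 → p = 0 := fun hp hfp =>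
    hp.eq_zero_of_isNilpotent (hker _ hfp)
  refine ⟨he, fun he0 => h.2.1 (by rw [he0, map_zero]), fun p q hp hq hpq hqp hsum => ?_⟩
  refine (h.2.2 (f p) (f q) (hp.map f) (hq.map f) ?_ ?_ ?_).imp (hzero hp) (hzero hq)
  · rw [← map_mul, hpq, map_zero]
  · rw [← map_mul, hqp, map_zero]
  · rw [← map_add, hsum]

theorem IsPrimitiveIdem.map {f : R →+* Q} (hf : Surjective f)
    (hker : ∀ x ∈ RingHom.ker f, IsNilpotent x) {e : R} (h : IsPrimitiveIdem R e) :
    IsPrimitiveIdem Q (f e) := by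
  refine ⟨h.1.map f, fun hfe => h.2.1 (h.1.eq_zero_of_isNilpotent (hker e hfe)),
    fun φ γ hφ hγ hφγ hγφ hsum => ?_⟩
  have hφe : φ * f (1 - e) = 0 := by
    rw [map_sub, map_one, mul_sub, mul_one, ← hsum, mul_add, hφ.eq, hφγ, add_zero, sub_self]
  have heφ : f (1 - e) * φ = 0 := by
    rw [map_sub, map_one, sub_mul, one_mul, ← hsum, add_mul, hφ.eq, hγφ, add_zero, sub_self]
  obtain ⟨g, hg, rfl, hge, heg⟩ := exists_isIdempotentElem_mul_eq_zero_of_ker_isNilpotent f hker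
    φ (hf φ) hφ (1 - e) h.1.one_sub hφe heφ
  rw [mul_sub, mul_one, sub_eq_zero] at hge
  rw [sub_mul, one_mul, sub_eq_zero] at heg
  rcases h.eq_zero_or_eq hg heg.symm hge.symm with rfl | rfl
  · exact Or.inl (map_zero f)
  · exact Or.inr (by simpa using hsum)

theorem isPrimitiveIdem_of_isAtom_span {φ : Q} (hφ : IsIdempotentElem φ)
    (hat : IsAtom (Ideal.span {φ})) : IsPrimitiveIdem Q φ := by
  refine ⟨hφ, fun h0 => hat.1 (by rw [h0, Ideal.span_singleton_eq_bot]), ?_⟩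
  intro p q hp hq hpq hqp hsum
  have hpφ : p * φ = p := by rw [← hsum, mul_add, hp.eq, hpq, add_zero]
  have hqφ : q * φ = q := by rw [← hsum, mul_add, hqp, hq.eq, zero_add]
  have hle : Ideal.span {p} ≤ Ideal.span {φ} :=
    (Ideal.span_singleton_le_iff_mem _).mpr (Ideal.mem_span_singleton'.mpr ⟨p, hpφ⟩)
  rcases hat.le_iff.mp hle with hbot | heq
  · exact Or.inl (Ideal.span_singleton_eq_bot.mp hbot)
  · have hφp : φ * p = φ := hp.mul_eq_self_of_mem_span (heq ▸ Ideal.mem_span_singleton_self _)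
    exact Or.inr (by rw [← hqφ, ← hφp, ← mul_assoc, hqφ, hqp])

theorem IsPrimitiveIdem.isAtom_span [IsSemisimpleRing Q] {φ : Q} (h : IsPrimitiveIdem Q φ) :
    IsAtom (Ideal.span {φ}) := by
  refine ⟨fun h0 => h.2.1 (Ideal.span_singleton_eq_bot.mp h0), fun N hN => ?_⟩
  obtain ⟨p, hp, rfl⟩ := IsSemisimpleRing.ideal_eq_span_idempotent N
  have hpφ : p * φ = p := h.1.mul_eq_self_of_mem_span (hN.le (Ideal.mem_span_singleton_self p))
  have hidem : IsIdempotentElem (φ * p) := by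
    rw [IsIdempotentElem, mul_assoc, ← mul_assoc p, hpφ, hp.eq]
  rcases h.eq_zero_or_eq hidem (by rw [← mul_assoc, h.1.eq]) (by rw [mul_assoc, hpφ])
    with h0 | hφp
  · rw [Ideal.span_singleton_eq_bot]
    calc p = p * φ * p := by rw [hpφ, hp.eq]
      _ = 0 := by rw [mul_assoc, h0, mul_zero]
  · exact absurd ((Ideal.span_singleton_le_iff_mem _).mpr
      (Ideal.mem_span_singleton'.mpr ⟨φ, hφp⟩)) hN.not_ge

end Primitive

section Schur

variable {Q : Type*} [Ring Q]

theorem exists_linearEquiv_mul_right_of_isAtom {φ ψ y : Q} (hφ : IsAtom (Ideal.span {φ}))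
    (hψ : IsAtom (Ideal.span {ψ})) (hφy : φ * y = y) (hy : y ∈ Ideal.span {ψ})
    (hy0 : y ≠ 0) :
    ∃ g : Ideal.span {φ} ≃ₗ[Q] Ideal.span {ψ}, ∀ x, (g x : Q) = x * y := by
  have := isSimpleModule_iff_isAtom.mpr hφ
  have := isSimpleModule_iff_isAtom.mpr hψ
  have hne : spanSingletonMulRight φ hy ≠ 0 := fun h => hy0 <| by
    simpa [hφy] using congrArg Subtype.val
      (LinearMap.congr_fun h ⟨φ, Ideal.mem_span_singleton_self φ⟩)
  exact ⟨.ofBijective _ (LinearMap.bijective_of_ne_zero hne), fun _ => rfl⟩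

theorem mul_mul_eq_zero_of_not_murrayVonNeumannEquiv {φ ψ : Q} (hφ : IsIdempotentElem φ)
    (hψ : IsIdempotentElem ψ) (hφa : IsAtom (Ideal.span {φ})) (hψa : IsAtom (Ideal.span {ψ}))
    (h : ¬MurrayVonNeumannEquiv φ ψ) (z : Q) : φ * z * ψ = 0 := by
  by_contra hy0
  obtain ⟨g, -⟩ := exists_linearEquiv_mul_right_of_isAtom hφa hψa
    (by rw [← mul_assoc, ← mul_assoc, hφ.eq])
    (Ideal.mul_mem_left _ _ (Ideal.mem_span_singleton_self ψ)) hy0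
  exact h ((murrayVonNeumannEquiv_iff_nonempty_linearEquiv hφ hψ).mpr ⟨g⟩)

theorem eq_zero_of_mul_self_eq_zero_of_isAtom {φ y : Q} (hat : IsAtom (Ideal.span {φ}))
    (hφy : φ * y = y) (hyφ : y * φ = y) (hyy : y * y = 0) : y = 0 := by
  by_contra hy0
  have hy : y ∈ Ideal.span {φ} := Ideal.mem_span_singleton'.mpr ⟨y, hyφ⟩
  obtain ⟨g, hg⟩ := exists_linearEquiv_mul_right_of_isAtom hat hat hφy hy hy0
  have hgy : g ⟨y, hy⟩ = 0 := Subtype.ext (by rw [hg]; exact hyy)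
  exact hy0 (congrArg Subtype.val (g.map_eq_zero_iff.mp hgy))

theorem CompleteOrthogonalIdempotents.commute_of_mul_mul_eq_zero {ι : Type*} [Fintype ι]
    {v : ι → Q} (hv : CompleteOrthogonalIdempotents v)
    (h : ∀ i j, i ≠ j → ∀ z, v i * z * v j = 0) (i : ι) (z : Q) : Commute (v i) z := by
  classical
  have hl : v i * z = v i * z * v i := by
    conv_lhs => rw [← mul_one (v i * z), ← hv.complete, Finset.mul_sum]
    exact Finset.sum_eq_single i (fun j _ hji => h i j hji.symm z) (by simp)
  have hr : z * v i = v i * z * v i := by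
    conv_lhs => rw [← one_mul (z * v i), ← hv.complete, Finset.sum_mul]
    rw [Finset.sum_eq_single i (fun j _ hji => by rw [← mul_assoc, h j i hji z]) (by simp),
      mul_assoc]
  exact hl.trans hr.symm

theorem isReduced_of_completeOrthogonalIdempotents {ι : Type*} [Fintype ι] {v : ι → Q}
    (hv : CompleteOrthogonalIdempotents v) (hat : ∀ i, IsAtom (Ideal.span {v i}))
    (hne : ∀ i j, MurrayVonNeumannEquiv (v i) (v j) → i = j) : IsReduced Q := by
  have hcomm := hv.commute_of_mul_mul_eq_zero fun i j hij =>
    mul_mul_eq_zero_of_not_murrayVonNeumannEquiv (hv.idem i) (hv.idem j) (hat i) (hat j)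
      fun h => hij (hne i j h)
  refine (isReduced_iff_pow_one_lt 2 one_lt_two).mpr fun x hx => ?_
  have hxi : ∀ i, v i * x = 0 := fun i => eq_zero_of_mul_self_eq_zero_of_isAtom (hat i)
    (by rw [← mul_assoc, (hv.idem i).eq])
    (by rw [mul_assoc, ← (hcomm i x).eq, ← mul_assoc, (hv.idem i).eq])
    (by rw [mul_assoc, ← mul_assoc x, ← (hcomm i x).eq, mul_assoc, ← sq, hx, mul_zero,
      mul_zero])
  calc x = (∑ i, v i) * x := by rw [hv.complete, one_mul]
    _ = 0 := by rw [Finset.sum_mul]; exact Finset.sum_eq_zero fun i _ => hxi i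

end Schur

theorem IsSemisimpleRing.exists_completeOrthogonalIdempotents_isAtom (Q : Type u) [Ring Q]
    [IsSemisimpleRing Q] : ∃ (ι : Type u) (_ : Fintype ι) (v : ι → Q),
      CompleteOrthogonalIdempotents v ∧ ∀ i, IsAtom (Ideal.span {v i}) := by
  classical
  obtain ⟨s, hind, hsup, hsimple⟩ := IsSemisimpleModule.exists_sSupIndep_sSup_simples_eq_top Q Q
  rw [sSupIndep_iff] at hind
  have : Finite s := WellFoundedGT.finite_of_iSupIndep hind fun m =>
    (isSimpleModule_iff_isAtom.mp (hsimple _ m.2)).1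
  have := Fintype.ofFinite s
  set V : s → Ideal Q := Subtype.val
  have hint : DirectSum.IsInternal V :=
    DirectSum.isInternal_submodule_of_iSupIndep_of_iSup_eq_top hind
      (by rw [← sSup_eq_iSup', hsup])
  let := hint.chooseDecomposition
  refine ⟨s, inferInstance, DirectSum.idempotent V,
    DirectSum.completeOrthogonalIdempotents_idempotent V, fun m => ?_⟩
  have hspan : Ideal.span {DirectSum.idempotent V m} = V m := by
    refine le_antisymm ((Ideal.span_singleton_le_iff_mem _).mpr (SetLike.coe_mem _)) fun x hx => ?_
    rw [← DirectSum.decompose_of_mem_same _ hx, DirectSum.decompose_eq_mul_idempotent]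
    exact Ideal.mul_mem_left _ x (Ideal.mem_span_singleton_self _)
  rw [hspan]
  exact isSimpleModule_iff_isAtom.mp (hsimple _ m.2)

theorem Ideal.coe_eq_setOf_isNilpotent_iff_isReduced_quotient {R : Type*} [Ring R] (I : Ideal R)
    [I.IsTwoSided] (hI : ∀ x ∈ I, IsNilpotent x) :
    (I : Set R) = {x | IsNilpotent x} ↔ IsReduced (R ⧸ I) := by
  constructor
  · refine fun h => ⟨fun q ⟨n, hn⟩ => ?_⟩
    obtain ⟨x, rfl⟩ := Ideal.Quotient.mk_surjective q
    rw [← map_pow, Ideal.Quotient.eq_zero_iff_mem] at hn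
    rw [Ideal.Quotient.eq_zero_iff_mem, ← SetLike.mem_coe, h]
    exact (hI _ hn).of_pow
  · refine fun h => Set.ext fun x => ⟨hI x, fun hx => ?_⟩
    rw [SetLike.mem_coe, ← Ideal.Quotient.eq_zero_iff_mem]
    exact (hx.map (Ideal.Quotient.mk I)).eq_zero

theorem Ideal.Quotient.isSemisimpleRing_of_isSemisimpleModule {R : Type*} [Ring R] (I : Ideal R)
    [I.IsTwoSided] [IsSemisimpleModule R (R ⧸ I)] : IsSemisimpleRing (R ⧸ I) := by
  let l : (R ⧸ I) →ₛₗ[Ideal.Quotient.mk I] (R ⧸ I) :=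
    { AddMonoidHom.id _ with map_smul' := fun _ _ => rfl }
  exact (l.isSemisimpleModule_iff_of_bijective bijective_id).mp ‹_›

theorem IsCompleteOrthogonalPrimitiveSet.completeOrthogonalIdempotents {R ι : Type u} [Ring R]
    [Fintype ι] {e : ι → R} (h : IsCompleteOrthogonalPrimitiveSet R e) :
    CompleteOrthogonalIdempotents e :=
  ⟨⟨fun i => (h.1 i).1, fun {i j} hij => h.2.1 i j hij⟩, h.2.2⟩

section Basic

variable {R Q : Type u} [Ring R] [Ring Q] [IsSemisimpleRing Q] {f : R →+* Q}

theorem isReduced_of_isBasicRing (hf : Surjective f) (hker : ∀ x ∈ RingHom.ker f, IsNilpotent x)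
    (h : IsBasicRing R) : IsReduced Q := by
  obtain ⟨ι, _, e, hset, hbasic⟩ := h
  have he := hset.completeOrthogonalIdempotents
  refine isReduced_of_completeOrthogonalIdempotents (he.map f)
    (fun i => ((hset.1 i).map hf hker).isAtom_span) fun i j hij => hbasic i j ?_
  exact (murrayVonNeumannEquiv_iff_nonempty_linearEquiv (he.idem i) (he.idem j)).mp
    (hij.of_map hf hker (he.idem i) (he.idem j))

theorem isBasicRing_of_isReduced [IsReduced Q] (hf : Surjective f)
    (hker : ∀ x ∈ RingHom.ker f, IsNilpotent x) : IsBasicRing R := by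
  obtain ⟨ι, _, v, hv, hat⟩ := IsSemisimpleRing.exists_completeOrthogonalIdempotents_isAtom Q
  obtain ⟨e, he, rfl⟩ := hv.lift_of_isNilpotent_ker f hker fun i => hf (v i)
  refine ⟨ι, _, e, ⟨fun i => .of_map hker (he.idem i)
      (isPrimitiveIdem_of_isAtom_span (hv.idem i) (hat i)), fun _ _ hij => he.ortho hij,
      he.complete⟩, fun i j hij => ?_⟩
  have hfe : f (e i) = f (e j) :=
    (((murrayVonNeumannEquiv_iff_nonempty_linearEquiv (he.idem i) (he.idem j)).mpr hij).map
      f).eq_of_isReduced (hv.idem i) (hv.idem j)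
  by_contra hij
  refine (hat i).1 (Ideal.span_singleton_eq_bot.mpr ?_)
  calc f (e i) = f (e i) * f (e j) := by rw [← hfe, ((he.idem i).map f).eq]
    _ = 0 := hv.ortho hij

theorem isBasicRing_iff_isReduced (hf : Surjective f)
    (hker : ∀ x ∈ RingHom.ker f, IsNilpotent x) : IsBasicRing R ↔ IsReduced Q :=
  ⟨isReduced_of_isBasicRing hf hker, fun _ => isBasicRing_of_isReduced hf hker⟩

end Basic

instance (R : Type u) [Ring R] : (jac R).IsTwoSided :=
  inferInstanceAs (Ideal.jacobson ⊥).IsTwoSided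

/-- A semiperfect ring with nil Jacobson radical is basic iff its
Jacobson radical coincides with the set of nilpotent elements. -/
theorem statement_1 (R : Type u) [Ring R] (hsp : IsSemiperfectRing R)
    (hnil : ∀ x ∈ jac R, IsNilpotent x) :
    IsBasicRing R ↔ (jac R : Set R) = {x : R | IsNilpotent x} := by
  have : IsSemisimpleModule R (R ⧸ jac R) := hsp.1
  have := Ideal.Quotient.isSemisimpleRing_of_isSemisimpleModule (jac R)
  rw [(jac R).coe_eq_setOf_isNilpotent_iff_isReduced_quotient hnil]
  exact isBasicRing_iff_isReduced Ideal.Quotient.mk_surjective (by rwa [Ideal.mk_ker])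
end

section
/- Let R be a ring and P a finitely generated projective left R-module. A submodule N of P is superfluous in P if and only if N ⊆ J(R)P. -/
universe u

open Function CategoryTheory

/-! A superfluous submodule lies in every maximal submodule `m` (otherwise `N ⊔ m = ⊤`), so
superfluous submodules are exactly those inside the radical `Rad M` once every proper submodule
lies in a maximal one, as happens for finitely generated `M`. For a projective `P`, a splitting
`s` of `R^(P) → P` carries `Rad P` into `Rad R^(P)`, whose coordinates lie in `J(R)`; hence
`Rad P = J(R) P`. -/

section Superfluous

variable {R M : Type u} [Ring R] [AddCommGroup M] [Module R M]

theorem idealSMul_eq_smul (I : Ideal R) (p : Submodule R M) : idealSMul R M I p = I • p :=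
  le_antisymm (Submodule.span_le.mpr fun _ ⟨_, ha, _, hm, hx⟩ ↦ hx ▸ Submodule.smul_mem_smul ha hm)
    (Submodule.smul_le.mpr fun _ ha _ hm ↦ Submodule.subset_span ⟨_, ha, _, hm, rfl⟩)

theorem Superfluous.le_jacobson {N : Submodule R M} (hN : Superfluous R M N) :
    N ≤ Module.jacobson R M := by
  refine le_sInf fun m hm ↦ ?_
  rcases hm.le_iff.mp (le_sup_right : m ≤ N ⊔ m) with htop | heq
  · exact absurd (hN m htop) hm.ne_top
  · exact heq ▸ le_sup_left

theorem superfluous_of_le_jacobson [IsCoatomic (Submodule R M)] {N : Submodule R M}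
    (hN : N ≤ Module.jacobson R M) : Superfluous R M N := by
  intro L hL
  rcases eq_top_or_exists_le_coatom L with htop | ⟨m, hm, hLm⟩
  · exact htop
  · have hNm : N ≤ m := hN.trans (sInf_le hm)
    exact absurd (top_le_iff.mp (hL ▸ sup_le hNm hLm)) hm.ne_top

theorem superfluous_iff_le_jacobson [IsCoatomic (Submodule R M)] {N : Submodule R M} :
    Superfluous R M N ↔ N ≤ Module.jacobson R M :=
  ⟨Superfluous.le_jacobson, superfluous_of_le_jacobson⟩

end Superfluous

theorem Module.jacobson_eq_jacobson_smul_top_of_projective (R P : Type*) [Ring R]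
    [AddCommGroup P] [Module R P] [Module.Projective R P] :
    Module.jacobson R P = Ring.jacobson R • ⊤ := by
  refine le_antisymm (fun x hx ↦ ?_) (Ring.jacobson_smul_top_le R P)
  obtain ⟨s, hs⟩ := Module.Projective.out (R := R) (P := P)
  have hcoord (i : P) : s x i ∈ Ring.jacobson R :=
    Module.le_comap_jacobson (Finsupp.lapply i) (Module.le_comap_jacobson s hx)
  rw [← hs x, Finsupp.linearCombination_apply]
  exact Submodule.finsuppSum_mem _ _ _ _ fun i _ ↦
    Submodule.smul_mem_smul (hcoord i) Submodule.mem_top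

/-- For a finitely generated projective module `P`, a submodule is
superfluous iff it is contained in `J(R)P`. -/
theorem statement_3 (R : Type u) [Ring R] (P : Type u) [AddCommGroup P] [Module R P]
    [Module.Finite R P] (hP : Module.Projective R P) (N : Submodule R P) :
    Superfluous R P N ↔ N ≤ idealSMul R P (jac R) ⊤ := by
  rw [superfluous_iff_le_jacobson, Module.jacobson_eq_jacobson_smul_top_of_projective,
    idealSMul_eq_smul, jac, Ideal.jacobson_bot]
end

section
/- A ring R is left noetherian and left perfect if and only if R is left artinian. -/
universe u

open Function CategoryTheory

/-! A left artinian ring is semiprimary, and a nilpotent radical is left T-nilpotent; the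
noetherian half is Hopkins–Levitzki. Conversely, in a left noetherian ring the annihilators of
the powers `J ^ k` of a left T-nilpotent left ideal `J` stabilise, say from `k = m`. If
`J ^ m ≠ 0`, then any `y` with `y J ^ m ≠ 0` also has `y J ^ (m + 1) = (y J) J ^ m ≠ 0`, so some
`a ∈ J` has `y a J ^ m ≠ 0`; iterating from `y = 1` gives a sequence in `J` none of whose initial
products vanish. Hence `J(R)` is nilpotent, `R` is semiprimary, and Hopkins–Levitzki turns left
noetherian into left artinian. -/

theorem exists_seq_forall_prod_of_forall_exists_mul {M : Type*} [Monoid M] {T : Set M}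
    {P : M → Prop} (h1 : P 1) (hstep : ∀ y, P y → ∃ a ∈ T, P (y * a)) :
    ∃ a : ℕ → M, (∀ i, a i ∈ T) ∧ ∀ n, P ((List.range n).map a).prod := by
  choose! next hnextT hnextP using hstep
  let y : ℕ → M := fun n => Nat.rec 1 (fun _ y => y * next y) n
  have hy : ∀ n, P (y n) := fun n => Nat.rec h1 (fun _ ih => hnextP _ ih) n
  have hprod : ∀ n, ((List.range n).map fun i => next (y i)).prod = y n := by
    intro n
    induction n with
    | zero => rfl
    | succ n ih => rw [List.range_succ, List.map_append, List.prod_append, ih]; simp [y]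
  exact ⟨fun i => next (y i), fun i => hnextT _ (hy i), fun n => hprod n ▸ hy n⟩

theorem Submodule.mem_annihilator_smul_iff {R M : Type*} [Semiring R] [AddCommMonoid M]
    [Module R M] {I : Ideal R} {N : Submodule R M} {y : R} :
    y ∈ (I • N).annihilator ↔ ∀ a ∈ I, y * a ∈ N.annihilator := by
  simp only [mem_annihilator]
  refine ⟨fun h a ha n hn => by rw [mul_smul]; exact h _ (smul_mem_smul ha hn),
    fun h x hx => ?_⟩
  exact smul_induction_on hx (fun a ha n hn => by rw [← mul_smul]; exact h a ha n hn)
    fun x x' hx hx' => by rw [smul_add, hx, hx', add_zero]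

theorem Ideal.list_prod_mem_pow {S : Type*} [Semiring S] {I : Ideal S} {l : List S}
    (hl : ∀ x ∈ l, x ∈ I) :
    l.prod ∈ I ^ l.length := by
  induction l using List.reverseRecOn with
  | nil => simp [Submodule.pow_zero]
  | append_singleton l a ih =>
    simp only [List.mem_append, List.mem_singleton] at hl
    rw [List.prod_append, List.prod_singleton, List.length_append, List.length_singleton,
      Submodule.pow_succ]
    exact mul_mem_mul (ih fun x hx => hl x (.inl hx)) (hl a (.inr rfl))

namespace Ideal

variable {R : Type u} [Ring R]

theorem isSemisimpleModule_quotient_iff (I : Ideal R) [I.IsTwoSided] :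
    IsSemisimpleModule R (R ⧸ I) ↔ IsSemisimpleRing (R ⧸ I) :=
  LinearMap.isSemisimpleModule_iff_of_bijective (σ := Quotient.mk I)
    { toFun := id
      map_add' _ _ := rfl
      map_smul' _ x := Submodule.Quotient.induction_on _ x fun _ => rfl }
    Function.bijective_id

theorem isLeftTNilpotent_of_isNilpotent {I : Ideal R} (hI : IsNilpotent I) :
    IsLeftTNilpotent (I : Set R) := by
  obtain ⟨n, hn⟩ := hI
  intro a ha
  refine ⟨n, ?_⟩
  have := list_prod_mem_pow (I := I) (l := (List.range (n + 1)).map a)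
    (by simpa using fun i _ => ha i)
  rwa [List.length_map, List.length_range, Submodule.pow_succ, hn, zero_mul, zero_eq_bot,
    mem_bot] at this

theorem isNilpotent_of_isLeftTNilpotent [IsNoetherianRing R] {I : Ideal R}
    (hI : IsLeftTNilpotent (I : Set R)) : IsNilpotent I := by
  obtain ⟨n, hn⟩ := monotone_stabilizes_iff_noetherian.mpr ‹IsNoetherianRing R›
    ⟨fun k => (I ^ k).annihilator, fun _ _ h => Submodule.annihilator_mono (pow_le_pow_right h)⟩
  set L := (I ^ (n + 1)).annihilator
  have hstable : (I ^ (n + 1 + 1)).annihilator = L :=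
    (hn (n + 1 + 1) (by omega)).symm.trans (hn _ (by omega))
  refine ⟨n + 1, ?_⟩
  by_contra hne
  have hone : (1 : R) ∉ L := fun h => hne <| (Submodule.eq_bot_iff _).mpr fun b hb => by
    simpa using Submodule.mem_annihilator.mp h b hb
  have hstep : ∀ y ∉ L, ∃ a ∈ (I : Set R), y * a ∉ L := by
    intro y hy
    rw [← hstable, Submodule.pow_succ' _ n.succ_ne_zero, ← Ideal.smul_eq_mul,
      Submodule.mem_annihilator_smul_iff] at hy
    obtain ⟨a, ha, hya⟩ := not_forall₂.mp hy
    exact ⟨a, ha, hya⟩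
  obtain ⟨a, haI, ha⟩ := exists_seq_forall_prod_of_forall_exists_mul hone hstep
  obtain ⟨k, hk⟩ := hI a haI
  exact ha (k + 1) (hk ▸ L.zero_mem)

end Ideal

section

variable {R : Type u} [Ring R]

theorem isSemilocalRing_iff : IsSemilocalRing R ↔ IsSemisimpleRing (R ⧸ Ring.jacobson R) := by
  rw [IsSemilocalRing, jac, Ideal.jacobson_bot, Ideal.isSemisimpleModule_quotient_iff]

theorem IsSemiprimaryRing.isLeftPerfectRing [IsSemiprimaryRing R] : IsLeftPerfectRing R :=
  ⟨isSemilocalRing_iff.mpr inferInstance, by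
    rw [jac, Ideal.jacobson_bot]
    exact Ideal.isLeftTNilpotent_of_isNilpotent IsSemiprimaryRing.isNilpotent⟩

theorem IsLeftPerfectRing.isSemiprimaryRing [IsNoetherianRing R] (h : IsLeftPerfectRing R) :
    IsSemiprimaryRing R := by
  obtain ⟨hsemilocal, hT⟩ := h
  rw [jac, Ideal.jacobson_bot] at hT
  exact ⟨isSemilocalRing_iff.mp hsemilocal, Ideal.isNilpotent_of_isLeftTNilpotent hT⟩

end

/-- A ring is left noetherian and left perfect iff it is left artinian. -/
theorem statement_5 (R : Type u) [Ring R] :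
    (IsNoetherianRing R ∧ IsLeftPerfectRing R) ↔ IsArtinianRing R := by
  constructor
  · rintro ⟨_, h⟩
    have := h.isSemiprimaryRing
    exact IsSemiprimaryRing.isNoetherian_iff_isArtinian.mp ‹_›
  · intro
    exact ⟨inferInstance, IsSemiprimaryRing.isLeftPerfectRing⟩
end

section
/- Let φ : A → B be a ring homomorphism. If for every finitely generated left A-module M with projective cover f : P → M the map B ⊗_A f is either a projective cover of the non-zero module B ⊗_A M, or both B ⊗_A M and B ⊗_A P are zero, then φ is radical-preserving, i.e. φ(J(A)) ⊆ J(B). -/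
universe u

open Function CategoryTheory

/-! The quotient map `A ↠ A/J(A)` is a projective cover. Identifying `B ⊗_A A` with `B`, its
induced map becomes `B ↠ B ⊗_A A/J(A)`, whose kernel contains `φ(J(A))`; a superfluous left
ideal of `B` lies in `J(B)`. In the degenerate case `B ⊗_A A = 0` the ring `B` is zero. -/

section Superfluous

variable {R : Type u} [Ring R]

theorem superfluous_iff_le_jac (I : Ideal R) : Superfluous R R I ↔ I ≤ jac R := by
  constructor
  · intro hI
    refine le_sInf fun m ⟨_, hm⟩ => ?_
    by_contra hIm
    exact hm.ne_top (hI m (hm.out.not_le_iff_codisjoint.mp hIm).symm.eq_top)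
  · intro hI L hL
    by_contra hL_ne
    obtain ⟨m, hm, hLm⟩ := Ideal.exists_le_maximal L hL_ne
    have hjac : jac R ≤ m := sInf_le ⟨bot_le, hm⟩
    exact hm.ne_top (top_le_iff.mp (hL ▸ sup_le (hI.trans hjac) hLm))

theorem Superfluous.comap_linearEquiv {M N : Type u} [AddCommGroup M] [Module R M]
    [AddCommGroup N] [Module R N] (e : M ≃ₗ[R] N) {K : Submodule R N}
    (hK : Superfluous R N K) : Superfluous R M (K.comap (e : M →ₗ[R] N)) := by
  intro L hL
  have hmap : K ⊔ L.map (e : M →ₗ[R] N) = ⊤ := by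
    rw [← Submodule.map_comap_eq_of_surjective e.surjective K, ← Submodule.map_sup, hL,
      Submodule.map_top, LinearEquiv.range]
  rw [← Submodule.comap_map_eq_of_injective e.injective L, hK _ hmap, Submodule.comap_top]

theorem isProjectiveCover_mkQ_jac : IsProjectiveCover R (R ⧸ jac R) (jac R).mkQ :=
  ⟨inferInstance, Submodule.mkQ_surjective _, by
    rw [Submodule.ker_mkQ]; exact (superfluous_iff_le_jac _).mpr le_rfl⟩

end Superfluous

namespace TensorB

variable {A B : Type u} [Ring A] [Ring B] (φ : A →+* B)

noncomputable def mk (M : Type u) [AddCommGroup M] [Module A M] :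
    TensorProduct ℤ B M →ₗ[B] TensorB φ M :=
  (TensorRel φ M).mkQ

theorem mk_mul_tmul {M : Type u} [AddCommGroup M] [Module A M] (b : B) (a : A) (m : M) :
    mk φ M ((b * φ a) ⊗ₜ[ℤ] m) = mk φ M (b ⊗ₜ[ℤ] (a • m)) :=
  (Submodule.Quotient.eq _).mpr (Submodule.subset_span ⟨b, a, m, rfl⟩)

theorem tmap_mk {M N : Type u} [AddCommGroup M] [Module A M] [AddCommGroup N] [Module A N]
    (f : M →ₗ[A] N) (b : B) (m : M) :
    tmap φ f (mk φ M (b ⊗ₜ[ℤ] m)) = mk φ N (b ⊗ₜ[ℤ] f m) :=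
  rfl

theorem linearMap_ext {M N : Type u} [AddCommGroup M] [Module A M] [AddCommGroup N]
    [Module B N] {g g' : TensorB φ M →ₗ[B] N}
    (H : ∀ (b : B) (m : M), g (mk φ M (b ⊗ₜ[ℤ] m)) = g' (mk φ M (b ⊗ₜ[ℤ] m))) :
    g = g' :=
  Submodule.linearMap_qext _ (TensorProduct.AlgebraTensorModule.ext H)

noncomputable def ridAux : TensorProduct ℤ B A →ₗ[B] B :=
  TensorProduct.AlgebraTensorModule.lift
    { toFun := fun b => b • φ.toAddMonoidHom.toIntLinearMap
      map_add' := fun x y => add_smul x y _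
      map_smul' := fun c b => by simp [smul_eq_mul, mul_smul] }

theorem ridAux_tmul (b : B) (a : A) : ridAux φ (b ⊗ₜ[ℤ] a) = b * φ a := by
  simp [ridAux, smul_eq_mul]

noncomputable def ridHom : TensorB φ A →ₗ[B] B :=
  Submodule.liftQ (TensorRel φ A) (ridAux φ) (by
    rw [TensorRel, Submodule.span_le]
    rintro x ⟨b, a, m, rfl⟩
    simp [ridAux_tmul, mul_assoc])

theorem ridHom_mk (b : B) (a : A) : ridHom φ (mk φ A (b ⊗ₜ[ℤ] a)) = b * φ a :=
  ridAux_tmul φ b a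

theorem smul_mk_one_tmul (b : B) :
    b • mk φ A ((1 : B) ⊗ₜ[ℤ] (1 : A)) = mk φ A (b ⊗ₜ[ℤ] 1) := by
  rw [← map_smul, TensorProduct.smul_tmul', smul_eq_mul, mul_one]

noncomputable def rid : TensorB φ A ≃ₗ[B] B :=
  LinearEquiv.ofLinearMap (ridHom φ)
    (LinearMap.toSpanSingleton B _ (mk φ A ((1 : B) ⊗ₜ[ℤ] (1 : A))))
    (LinearMap.ext_ring <| by
      rw [LinearMap.comp_apply, LinearMap.toSpanSingleton_apply, one_smul, ridHom_mk, map_one,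
        mul_one, LinearMap.id_apply])
    (linearMap_ext φ fun b a => by
      rw [LinearMap.comp_apply, LinearMap.toSpanSingleton_apply, ridHom_mk, smul_mk_one_tmul,
        mk_mul_tmul, smul_eq_mul, mul_one, LinearMap.id_apply])

theorem rid_symm_apply (b : B) : (rid φ).symm b = mk φ A (b ⊗ₜ[ℤ] (1 : A)) :=
  smul_mk_one_tmul φ b

theorem rid_symm_map_mem_ker_tmap_mkQ {I : Ideal A} {a : A} (ha : a ∈ I) :
    (rid φ).symm (φ a) ∈ LinearMap.ker (tmap φ I.mkQ) := by
  rw [LinearMap.mem_ker, rid_symm_apply, tmap_mk, ← one_mul (φ a), mk_mul_tmul, ← map_smul,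
    smul_eq_mul, mul_one, Submodule.mkQ_apply, (Submodule.Quotient.mk_eq_zero _).mpr ha,
    TensorProduct.tmul_zero, map_zero]

end TensorB

/-- If induction along `φ` preserves projective covers of finitely
generated modules, then `φ` is radical-preserving. -/
theorem statement_8 {A B : Type u} [Ring A] [Ring B] (φ : A →+* B)
    (h : ∀ (M P : Type u) [AddCommGroup M] [Module A M] [AddCommGroup P] [Module A P],
      Module.Finite A M → ∀ f : P →ₗ[A] M, IsProjectiveCover A M f →
        ((∃ x : TensorB φ M, x ≠ 0) ∧ IsProjectiveCover B (TensorB φ M) (tmap φ f)) ∨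
          ((∀ x : TensorB φ M, x = 0) ∧ (∀ x : TensorB φ P, x = 0))) :
    ∀ a ∈ jac A, φ a ∈ jac B := by
  intro a ha
  rcases h (A ⧸ jac A) A inferInstance _ isProjectiveCover_mkQ_jac with
    ⟨-, -, -, hker⟩ | ⟨-, hzero⟩
  · have hsmall :
        Superfluous B B (LinearMap.ker (tmap φ (jac A).mkQ ∘ₗ (TensorB.rid φ).symm)) := by
      rw [LinearMap.ker_comp]
      exact Superfluous.comap_linearEquiv (TensorB.rid φ).symm hker
    exact (superfluous_iff_le_jac _).mp hsmall (TensorB.rid_symm_map_mem_ker_tmap_mkQ φ ha)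
  · have : Subsingleton (TensorB φ A) := ⟨fun x y => (hzero x).trans (hzero y).symm⟩
    have : Subsingleton B := (TensorB.rid φ).symm.injective.subsingleton
    exact Subsingleton.elim 0 (φ a) ▸ zero_mem _
end

section
/- Let φ : A → B be a ring homomorphism with A semiperfect. Then Ker φ ⊆ J(A) if and only if B ⊗_A P ≠ 0 for every non-zero finitely generated projective left A-module P. -/
universe u

open Function CategoryTheory

/-!
If `Ker φ ⊆ J(A)` and `B ⊗_A P = 0`, the coordinate functionals of `P`, a direct summand of a free
module, take values in `Ker φ`; hence `P = (Ker φ) P ⊆ J(A) P` and `P = 0` by Nakayama's lemma.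
Conversely, if `Ker φ ⊄ J(A)`, the image of `Ker φ` in the semisimple module `A / J(A)` is a direct
summand, hence generated by an element that is idempotent modulo `J(A)`. It lifts to an idempotent
`e ≠ 0`, which lies in the two-sided ideal `Ker φ` because `1 - J(A)` consists of units; then
`P = A e` satisfies `P = (Ker φ) P`, so `B ⊗_A P = 0`.
-/

namespace Ideal

variable {R : Type u} [Ring R]

theorem exists_mem_forall_sub_mul_mem_of_isSemisimpleModule (K I : Ideal R)
    [IsSemisimpleModule R (R ⧸ K)] : ∃ x ∈ I, ∀ y ∈ I, y - y * x ∈ K := by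
  obtain ⟨C, hC⟩ := exists_isCompl (Submodule.map K.mkQ I)
  obtain ⟨_, ⟨x, hxI, rfl⟩, c, hc, hsum⟩ := Submodule.mem_sup.1
    (hC.sup_eq_top ▸ Submodule.mem_top : K.mkQ 1 ∈ Submodule.map K.mkQ I ⊔ C)
  refine ⟨x, hxI, fun y hy => ?_⟩
  -- `x̄` is the component of `1̄` in the summand `Ī`, so `ȳ = y • 1̄` differs from `y x̄` by
  -- `y • c ∈ Ī ⊓ C = 0`.
  have hyc : K.mkQ (y - y * x) = y • c := by
    rw [eq_sub_of_add_eq' hsum, smul_sub, ← map_smul, ← map_smul, smul_eq_mul, smul_eq_mul,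
      mul_one, map_sub]
  have hmem : y • c ∈ Submodule.map K.mkQ I ⊓ C :=
    ⟨hyc ▸ Submodule.mem_map_of_mem (I.sub_mem hy (I.mul_mem_left y hxI)), C.smul_mem y hc⟩
  rwa [hC.inf_eq_bot, Submodule.mem_bot, ← hyc, Submodule.mkQ_apply,
    Submodule.Quotient.mk_eq_zero] at hmem

theorem mem_of_isIdempotentElem_of_sub_mem_jacobson {I : Ideal R} [I.IsTwoSided] {e x : R}
    (he : IsIdempotentElem e) (hx : x ∈ I) (hex : e - x ∈ jacobson ⊥) : e ∈ I := by
  obtain ⟨z, hz⟩ := exists_mul_add_sub_mem_of_mem_jacobson _ (neg_mem hex)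
  rw [mem_bot, sub_eq_zero] at hz
  have hxe : x * e = (-(e - x) + 1) * e := by
    rw [add_mul, neg_mul, sub_mul, he.eq, one_mul, neg_sub, sub_add_cancel]
  have : z * (x * e) = e := by rw [hxe, ← mul_assoc, hz, one_mul]
  exact this ▸ I.mul_mem_left z (I.mul_mem_right e hx)

end Ideal

theorem IsSemiperfectRing.exists_isIdempotentElem_mem_ne_zero {A : Type u} [Ring A]
    (hA : IsSemiperfectRing A) {I : Ideal A} [I.IsTwoSided] (hI : ¬I ≤ jac A) :
    ∃ e ∈ I, IsIdempotentElem e ∧ e ≠ 0 := by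
  have : IsSemisimpleModule A (A ⧸ jac A) := hA.1
  obtain ⟨x, hxI, hx⟩ := Ideal.exists_mem_forall_sub_mul_mem_of_isSemisimpleModule (jac A) I
  obtain ⟨a, haI, haJ⟩ := Set.not_subset.1 hI
  have hxJ : x ∉ jac A := fun h => haJ <| by
    simpa using (jac A).add_mem (hx a haI) ((jac A).mul_mem_left a h)
  obtain ⟨e, he, hex⟩ := hA.2 x (by simpa using neg_mem (hx x hxI))
  refine ⟨e, Ideal.mem_of_isIdempotentElem_of_sub_mem_jacobson he hxI hex, he, ?_⟩
  rintro rfl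
  exact hxJ (by simpa using hex)

theorem Submodule.top_le_smul_top_span_singleton {A : Type u} [Ring A] {I : Ideal A} {e : A}
    (he : IsIdempotentElem e) (heI : e ∈ I) :
    (⊤ : Submodule A (Submodule.span A {e})) ≤ I • ⊤ := by
  rintro ⟨_, hp⟩ -
  obtain ⟨c, rfl⟩ := Submodule.mem_span_singleton.1 hp
  have : (⟨c • e, hp⟩ : Submodule.span A {e}) =
      (c • e) • ⟨e, Submodule.mem_span_singleton_self e⟩ :=
    Subtype.ext (by simp [mul_assoc, he.eq])
  exact this ▸ Submodule.smul_mem_smul (I.smul_mem c heI) Submodule.mem_top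

theorem Module.Projective.span_singleton_of_isIdempotentElem {A : Type u} [Ring A] {e : A}
    (he : IsIdempotentElem e) : Module.Projective A (Submodule.span A {e}) := by
  refine .of_split (M := A) (Submodule.span A {e}).subtype
    ((LinearMap.toSpanSingleton A A e).codRestrict _
      fun c => Submodule.mem_span_singleton.2 ⟨c, rfl⟩) ?_
  ext ⟨_, hp⟩
  obtain ⟨c, rfl⟩ := Submodule.mem_span_singleton.1 hp
  simp [mul_assoc, he.eq]

namespace TensorB

variable {A B : Type u} [Ring A] [Ring B] (φ : A →+* B) {M : Type u} [AddCommGroup M]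
  [Module A M]

theorem subsingleton_of_top_le_ker_smul (h : (⊤ : Submodule A M) ≤ RingHom.ker φ • ⊤) :
    Subsingleton (TensorB φ M) := by
  have htmul : ∀ m : M, ∀ b : B, b ⊗ₜ[ℤ] m ∈ TensorRel φ M := by
    intro m
    refine Submodule.smul_induction_on (p := fun m => ∀ b : B, b ⊗ₜ[ℤ] m ∈ TensorRel φ M)
      (h Submodule.mem_top) (fun a ha n _ b => ?_)
      fun m n hm hn b => by rw [TensorProduct.tmul_add]; exact add_mem (hm b) (hn b)
    have hrel : (b * φ a) ⊗ₜ[ℤ] n - b ⊗ₜ[ℤ] (a • n) ∈ TensorRel φ M :=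
      Submodule.subset_span ⟨b, a, n, rfl⟩
    simpa [RingHom.mem_ker.1 ha] using hrel
  refine subsingleton_of_forall_eq 0 fun x => ?_
  obtain ⟨z, rfl⟩ := Submodule.Quotient.mk_surjective (TensorRel φ M) x
  refine (Submodule.Quotient.mk_eq_zero _).2 ?_
  induction z using TensorProduct.induction_on with
  | zero => exact zero_mem _
  | tmul b m => exact htmul m b
  | add x y hx hy => exact add_mem hx hy

noncomputable def liftFunctional (f : M →ₗ[A] A) : TensorB φ M →ₗ[B] B :=
  (TensorRel φ M).liftQ
    (TensorProduct.AlgebraTensorModule.lift <| LinearMap.toSpanSingleton B _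
      (φ.toAddMonoidHom.comp f.toAddMonoidHom).toIntLinearMap) <| by
    rw [TensorRel, Submodule.span_le]
    rintro _ ⟨b, a, m, rfl⟩
    simp [mul_assoc]

theorem liftFunctional_mk_tmul (f : M →ₗ[A] A) (b : B) (m : M) :
    liftFunctional φ f (Submodule.Quotient.mk (b ⊗ₜ[ℤ] m)) = b * φ (f m) :=
  rfl

theorem top_le_ker_smul_of_subsingleton [Module.Projective A M] [Subsingleton (TensorB φ M)] :
    (⊤ : Submodule A M) ≤ RingHom.ker φ • ⊤ := by
  obtain ⟨s, hs⟩ := Module.projective_def'.1 ‹Module.Projective A M›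
  have hcoord : ∀ m i, s m i ∈ RingHom.ker φ := fun m i => by
    have h := liftFunctional_mk_tmul φ (Finsupp.lapply i ∘ₗ s) 1 m
    rw [Subsingleton.elim (α := TensorB φ M) (Submodule.Quotient.mk _) 0, map_zero, one_mul] at h
    exact RingHom.mem_ker.2 h.symm
  intro m _
  have hm : Finsupp.linearCombination A id (s m) = m := LinearMap.congr_fun hs m
  rw [← hm, Finsupp.linearCombination_apply]
  exact Submodule.sum_mem _ fun i _ => Submodule.smul_mem_smul (hcoord m i) Submodule.mem_top

end TensorB

/-- For `A` semiperfect, `Ker φ ⊆ J(A)` iff every non-zero finitely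
generated projective `A`-module is `φ`-nonvanishing. -/
theorem statement_9 {A B : Type u} [Ring A] [Ring B] (φ : A →+* B)
    (hA : IsSemiperfectRing A) :
    (∀ a : A, φ a = 0 → a ∈ jac A) ↔
      ∀ (P : Type u) [AddCommGroup P] [Module A P], Module.Finite A P →
        Module.Projective A P → (∃ p : P, p ≠ 0) → ∃ x : TensorB φ P, x ≠ 0 := by
  constructor
  · intro hker P _ _ hfin _ ⟨p, hp⟩
    by_contra! hzero
    have : Subsingleton (TensorB φ P) := subsingleton_of_forall_eq 0 hzero
    have hJ : (⊤ : Submodule A P) ≤ Ring.jacobson A • ⊤ :=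
      (TensorB.top_le_ker_smul_of_subsingleton φ).trans <| Submodule.smul_mono_left
        fun a ha => Ideal.jacobson_bot (R := A) ▸ hker a ha
    have htop := Submodule.FG.eq_bot_of_le_jacobson_smul hfin.fg_top hJ
    exact hp <| (Submodule.mem_bot A).1 (htop ▸ Submodule.mem_top)
  · intro hP a ha
    by_contra haJ
    obtain ⟨e, heI, he, he0⟩ := hA.exists_isIdempotentElem_mem_ne_zero
      (I := RingHom.ker φ) fun h => haJ (h (RingHom.mem_ker.2 ha))
    obtain ⟨x, hx⟩ := hP (Submodule.span A {e})
      inferInstance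
      (.span_singleton_of_isIdempotentElem he)
      ⟨⟨e, Submodule.mem_span_singleton_self e⟩, fun h => he0 (congrArg Subtype.val h)⟩
    have := TensorB.subsingleton_of_top_le_ker_smul φ
      (Submodule.top_le_smul_top_span_singleton he heI)
    exact hx (Subsingleton.elim x 0)
end

section
/- Let φ : A → B be a ring homomorphism with A left perfect and Ker φ ⊆ J(A). Then B ⊗_A P ≠ 0 for every non-zero projective left A-module P (not necessarily finitely generated). -/
universe u

open Function CategoryTheory

/-! If `B ⊗_A P = 0`, every functional `f : P → A` takes values in `Ker φ ⊆ J(A)`, since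
`b ⊗ m ↦ b * φ (f m)` is well defined on `B ⊗_A P`. A projective module is generated by the
values of its coordinate functionals, so `P = J(A) P`. By left T-nilpotence of `J(A)` this
forces `P = 0` (Bass): if `x ≠ 0` in `N = J N`, writing elements of `N` as sums `∑ aᵢ yᵢ` with
`aᵢ ∈ J` lets one choose `a₀, a₁, … ∈ J` and `yₙ ∈ N` with `a₀ ⋯ aₙ₋₁ yₙ ≠ 0` for every `n`. -/

lemma exists_seq_forall_prod_range {R : Type*} [Monoid R] {S : Set R} {Q : R → Prop} (h1 : Q 1)
    (hstep : ∀ r, Q r → ∃ a ∈ S, Q (r * a)) :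
    ∃ c : ℕ → R, (∀ n, c n ∈ S) ∧ ∀ n, Q ((List.range n).map c).prod := by
  choose a haS haQ using hstep
  let seq : ℕ → {r // Q r} := fun n =>
    Nat.rec ⟨1, h1⟩ (fun _ r => ⟨r.1 * a r.1 r.2, haQ r.1 r.2⟩) n
  let c : ℕ → R := fun n => a (seq n).1 (seq n).2
  have hseq : ∀ n, (seq n).1 = ((List.range n).map c).prod := by
    intro n
    induction n with
    | zero => rfl
    | succ n ih => rw [List.prod_range_succ, ← ih]
  exact ⟨c, fun n => haS _ _, fun n => hseq n ▸ (seq n).2⟩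

section TNilpotent

variable {R M : Type u} [Ring R] [AddCommGroup M] [Module R M] {I : Ideal R} {N : Submodule R M}

lemma smul_eq_zero_of_mem_idealSMul {x : M} (hx : x ∈ idealSMul R M I N) {r : R}
    (hr : ∀ a ∈ I, ∀ y ∈ N, (r * a) • y = 0) : r • x = 0 := by
  induction hx using Submodule.span_induction generalizing r with
  | mem x hx =>
    obtain ⟨a, ha, y, hy, rfl⟩ := hx
    rw [smul_smul, hr a ha y hy]
  | zero => exact smul_zero r
  | add x y _ _ hx hy => rw [smul_add, hx hr, hy hr, add_zero]
  | smul c x _ hx =>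
    rw [smul_smul]
    exact hx fun a ha y hy => by rw [mul_assoc, hr _ (I.mul_mem_left c ha) y hy]

lemma eq_bot_of_le_idealSMul (hI : IsLeftTNilpotent (I : Set R))
    (hN : N ≤ idealSMul R M I N) : N = ⊥ := by
  by_contra hne
  obtain ⟨x, hxN, hx⟩ := Submodule.exists_mem_ne_zero_of_ne_bot hne
  obtain ⟨c, hcI, hc⟩ := exists_seq_forall_prod_range (S := I)
    (Q := fun r : R => ∃ y ∈ N, r • y ≠ 0) ⟨x, hxN, by rwa [one_smul]⟩ (by
      rintro r ⟨y, hyN, hy⟩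
      by_contra! hr
      exact hy (smul_eq_zero_of_mem_idealSMul (hN hyN) hr))
  obtain ⟨n, hn⟩ := hI c hcI
  obtain ⟨y, -, hy⟩ := hc (n + 1)
  exact hy (by rw [hn, zero_smul])

end TNilpotent

lemma Module.Projective.top_le_idealSMul {R P : Type u} [Ring R] [AddCommGroup P] [Module R P]
    [Module.Projective R P] {I : Ideal R} (hI : ∀ (f : P →ₗ[R] R) (p : P), f p ∈ I) :
    ⊤ ≤ idealSMul R P I ⊤ := by
  obtain ⟨s, hs⟩ := Module.projective_def.mp ‹_›
  intro p _
  rw [← hs p, Finsupp.linearCombination_apply]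
  exact Submodule.sum_mem _ fun i _ =>
    Submodule.subset_span ⟨s p i, hI (Finsupp.lapply i ∘ₗ s) p, i, trivial, rfl⟩

namespace TensorB

variable {A B : Type u} [Ring A] [Ring B] (φ : A →+* B)
  {M : Type u} [AddCommGroup M] [Module A M]

noncomputable def dualMap (f : M →ₗ[A] A) : TensorB φ M →ₗ[B] B :=
  (TensorRel φ M).liftQ
    (TensorProduct.AlgebraTensorModule.lift <| LinearMap.toSpanSingleton B (M →ₗ[ℤ] B)
      (φ.toAddMonoidHom.comp f.toAddMonoidHom).toIntLinearMap)
    (by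
      rw [TensorRel, Submodule.span_le]
      rintro _ ⟨b, a, m, rfl⟩
      simp [mul_assoc])

lemma dualMap_mk_tmul (f : M →ₗ[A] A) (b : B) (m : M) :
    dualMap φ f (Submodule.Quotient.mk (b ⊗ₜ[ℤ] m)) = b * φ (f m) :=
  rfl

lemma map_apply_eq_zero_of_subsingleton [Subsingleton (TensorB φ M)] (f : M →ₗ[A] A) (m : M) :
    φ (f m) = 0 := by
  simpa [dualMap_mk_tmul] using congrArg (dualMap φ f)
    (Subsingleton.elim (α := TensorB φ M) (Submodule.Quotient.mk ((1 : B) ⊗ₜ[ℤ] m)) 0)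

end TensorB

/-- For `A` left perfect and `Ker φ ⊆ J(A)`, every non-zero
projective `A`-module is `φ`-nonvanishing. -/
theorem statement_10 {A B : Type u} [Ring A] [Ring B] (φ : A →+* B)
    (hA : IsLeftPerfectRing A) (hker : ∀ a : A, φ a = 0 → a ∈ jac A) :
    ∀ (P : Type u) [AddCommGroup P] [Module A P], Module.Projective A P →
      (∃ p : P, p ≠ 0) → ∃ x : TensorB φ P, x ≠ 0 := by
  intro P _ _ _ ⟨p, hp⟩
  by_contra! hzero
  have : Subsingleton (TensorB φ P) := subsingleton_of_forall_eq 0 hzero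
  have hJP : ⊤ ≤ idealSMul A P (jac A) ⊤ := Module.Projective.top_le_idealSMul fun f m =>
    hker _ (TensorB.map_apply_eq_zero_of_subsingleton φ f m)
  exact hp ((Submodule.eq_bot_iff ⊤).mp (eq_bot_of_le_idealSMul hA.2 hJP) p trivial)
end
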